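/- arXiv:2110.15462 — 10 statements merged into one kernel-verified Lean document; each statement's English description precedes it below -/
import Mathlib

section
/- Let T>0, B>0, 𝒜>0, γ_ex>0, γ_gb ≥ 0, γ_gas, γ_grs ∈ ℝ, and m = γ_gb/γ_ex. For i=1,2,3 let r_i, z_i : [0,1]×[0,T) → ℝ be smooth with r_i(α,t) > 0, with equidistributed parametrizations r_{iα}²+z_{iα}² = c_i(t) > 0 (independent of α), and with mean curvature H_i = (r_{iα} z_{iαα} − z_{iα} r_{iαα})/(2 (r_{iα}²+z_{iα}²)^{3/2}) + z_{iα}/(2 r_i √(r_{iα}²+z_{iα}²)). Suppose: (a) for i=1,2 the surface-diffusion equations r_{iα} z_{it} − z_{iα} r_{it} = −B (r_i H_{iα})_α / (r_i √(r_{iα}²+z_{iα}²)) hold, and for i=3 the mean-curvature-flow equation r_{3α} z_{3t} − z_{3α} r_{3t} = 𝒜 √(r_{3α}²+z_{3α}²) H₃ holds; (b) the endpoint conditions z₁(0,t)=0, z₃(0,t)=0, r_{3α}(0,t)=0, r₂(1,t)=1, z_{2α}(1,t)=0, and (r₁(1,t),z₁(1,t)) = (r₂(0,t),z₂(0,t))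 = (r₃(1,t),z₃(1,t)) hold; (c) the Herring force-balance condition holds at the triple junction: with unit tangents τ̂_i(α,t) = (r_{iα},z_{iα})/√(c_i(t)), one has τ̂₁(1,t) + m τ̂₃(1,t) = τ̂₂(0,t); (d) r_{1α}(0,t)/√(c₁(t)) = cos(θ_c) for a constant θ_c; (e) the chemical potential is continuous: H₁(1,t) = H₂(0,t); and (f) the flux conditions H_{1α}(0,t)=0, H_{2α}(1,t)=0, H_{1α}(1,t)/√(c₁(t)) = H_{2α}(0,t)/√(c₂(t)) hold. Then the total free energy 𝔼(t) = π γ_grs + γ_ex ( A_ex(t) + π cos(θ_c) r₁(0,t)² ) + γ_gb A_gb(t), where A_ex(t) = 2π Σ_{i=1,2} ∫₀¹ r_i √(r_{iα}²+z_{iα}²) dα and A_gb(t) = 2π ∫₀¹ r₃ √(r_{3α}²+z_{3α}²) dα, satisfies d𝔼/dt = −4π ( γ_ex Σ_{i=1,2} ∫₀¹ B r_i H_{iα}² / √(c_i(t)) dα + γ_gb ∫₀¹ 𝒜 r₃ H₃² √(c₃(t)) dα ) ≤ 0 for all t ∈ (0,T); in particular 𝔼 is non-increasing in time. -/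
open Function Set MeasureTheory intervalIntegral Filter ContDiff Topology

open Function Set MeasureTheory intervalIntegral Filter

namespace EDissip

/-- second-coordinate partial derivative -/
noncomputable def pt2 (f : ℝ → ℝ → ℝ) (α s : ℝ) : ℝ := fderiv ℝ (uncurry f) (α, s) (0, 1)

/-- first-coordinate partial derivative -/
noncomputable def pa2 (f : ℝ → ℝ → ℝ) (α s : ℝ) : ℝ := fderiv ℝ (uncurry f) (α, s) (1, 0)

variable {f : ℝ → ℝ → ℝ}

lemma hasDerivAt_snd (hf : ContDiff ℝ (⊤ : ℕ∞) (uncurry f)) (α s : ℝ) :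
    HasDerivAt (fun s' => f α s') (pt2 f α s) s := by
  have h1 : HasFDerivAt (uncurry f) (fderiv ℝ (uncurry f) (α, s)) (α, s) :=
    (hf.differentiable (by simp) (α, s)).hasFDerivAt
  have h2 : HasDerivAt (fun s' : ℝ => ((α, s') : ℝ × ℝ)) ((0 : ℝ), (1 : ℝ)) s :=
    HasDerivAt.prodMk (hasDerivAt_const s α) (hasDerivAt_id s)
  exact h1.comp_hasDerivAt s h2

lemma hasDerivAt_fst (hf : ContDiff ℝ (⊤ : ℕ∞) (uncurry f)) (α s : ℝ) :
    HasDerivAt (fun a => f a s) (pa2 f α s) α := by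
  have h1 : HasFDerivAt (uncurry f) (fderiv ℝ (uncurry f) (α, s)) (α, s) :=
    (hf.differentiable (by simp) (α, s)).hasFDerivAt
  have h2 : HasDerivAt (fun a : ℝ => ((a, s) : ℝ × ℝ)) ((1 : ℝ), (0 : ℝ)) α :=
    HasDerivAt.prodMk (hasDerivAt_id α) (hasDerivAt_const α s)
  exact h1.comp_hasDerivAt α h2

lemma deriv_fst (hf : ContDiff ℝ (⊤ : ℕ∞) (uncurry f)) (s : ℝ) :
    deriv (fun a => f a s) = fun a => pa2 f a s :=
  funext fun α => (hasDerivAt_fst hf α s).deriv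

lemma contDiff_pt2 (hf : ContDiff ℝ (⊤ : ℕ∞) (uncurry f)) : ContDiff ℝ (⊤ : ℕ∞) (uncurry (pt2 f)) := by
  have : ContDiff ℝ (⊤ : ℕ∞) (fderiv ℝ (uncurry f)) := hf.fderiv_right (by simp)
  exact this.clm_apply contDiff_const

lemma contDiff_pa2 (hf : ContDiff ℝ (⊤ : ℕ∞) (uncurry f)) : ContDiff ℝ (⊤ : ℕ∞) (uncurry (pa2 f)) := by
  have : ContDiff ℝ (⊤ : ℕ∞) (fderiv ℝ (uncurry f)) := hf.fderiv_right (by simp)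
  exact this.clm_apply contDiff_const

lemma mixed_symm (hf : ContDiff ℝ (⊤ : ℕ∞) (uncurry f)) (α s : ℝ) :
    pt2 (pa2 f) α s = pa2 (pt2 f) α s := by
  set F := uncurry f with hF
  set p : ℝ × ℝ := (α, s)
  have hD : HasFDerivAt (fderiv ℝ F) (fderiv ℝ (fderiv ℝ F) p) p :=
    (((hf.fderiv_right (m := 1) (by exact WithTop.coe_le_coe.mpr (le_top (a := (2:ℕ∞))))).differentiable one_ne_zero) p).hasFDerivAt
  have key : ∀ v : ℝ × ℝ, HasFDerivAt (fun q => fderiv ℝ F q v)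
      ((ContinuousLinearMap.apply ℝ ℝ v).comp (fderiv ℝ (fderiv ℝ F) p)) p := by
    intro v
    exact (ContinuousLinearMap.apply ℝ ℝ v).hasFDerivAt.comp p hD
  have h1 : pt2 (pa2 f) α s = fderiv ℝ (fderiv ℝ F) p (0, 1) (1, 0) := by
    have : uncurry (pa2 f) = fun q => fderiv ℝ F q (1, 0) := rfl
    rw [pt2, this, (key (1, 0)).fderiv]
    rfl
  have h2 : pa2 (pt2 f) α s = fderiv ℝ (fderiv ℝ F) p (1, 0) (0, 1) := by
    have : uncurry (pt2 f) = fun q => fderiv ℝ F q (0, 1) := rfl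
    rw [pa2, this, (key (0, 1)).fderiv]
    rfl
  rw [h1, h2]
  exact (hf.contDiffAt.isSymmSndFDerivAt (by simp; exact WithTop.coe_le_coe.mpr le_top)) _ _

/-- Differentiation under the interval integral for a smooth integrand. -/
lemma hasDerivAt_param_integral (hf : ContDiff ℝ (⊤ : ℕ∞) (uncurry f)) (t : ℝ) :
    HasDerivAt (fun s => ∫ α in (0:ℝ)..1, f α s) (∫ α in (0:ℝ)..1, pt2 f α t) t := by
  have hcont : Continuous (uncurry f) := hf.continuous
  have hcont' : Continuous (uncurry (pt2 f)) := (contDiff_pt2 hf).continuous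
  obtain ⟨C, hC⟩ : ∃ C, ∀ p ∈ (Icc (0:ℝ) 1) ×ˢ Metric.closedBall t 1,
      ‖uncurry (pt2 f) p‖ ≤ C :=
    ((isCompact_Icc.prod (isCompact_closedBall t 1)).exists_bound_of_continuousOn
      hcont'.continuousOn)
  have meas : ∀ s : ℝ, AEStronglyMeasurable (fun α => f α s)
      (volume.restrict (Set.uIoc (0:ℝ) 1)) := by
    intro s
    exact ((hcont.comp (continuous_id.prodMk continuous_const)).aestronglyMeasurable).restrict
  have meas' : AEStronglyMeasurable (fun α => pt2 f α t)
      (volume.restrict (Set.uIoc (0:ℝ) 1)) :=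
    ((hcont'.comp (continuous_id.prodMk continuous_const)).aestronglyMeasurable).restrict
  have key := intervalIntegral.hasDerivAt_integral_of_dominated_loc_of_deriv_le
    (F := fun s α => f α s) (F' := fun s α => pt2 f α s) (x₀ := t)
    (a := 0) (b := 1) (μ := volume) (bound := fun _ => C)
    (Metric.ball_mem_nhds t one_pos) (Eventually.of_forall fun s => meas s) ?_ meas' ?_ ?_ ?_
  · exact key.2
  · exact ((hcont.comp (continuous_id.prodMk continuous_const)).intervalIntegrable 0 1)
  · apply Eventually.of_forall
    intro α hα x hx
    have hα' : α ∈ Icc (0:ℝ) 1 := by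
      rw [uIoc_of_le (by norm_num : (0:ℝ) ≤ 1)] at hα
      exact Ioc_subset_Icc_self hα
    exact hC (α, x) ⟨hα', Metric.ball_subset_closedBall hx⟩
  · exact intervalIntegrable_const
  · apply Eventually.of_forall
    intro α _ x _
    exact hasDerivAt_snd hf α x

end EDissip

namespace EDissip

open Function Set MeasureTheory intervalIntegral Filter ContDiff Topology

lemma MC_curve
    (r z : ℝ → ℝ → ℝ) (c : ℝ → ℝ) (h Φ : ℝ → ℝ) (T t A : ℝ)
    (hr : ContDiff ℝ (⊤ : ℕ∞) (uncurry r)) (hz : ContDiff ℝ (⊤ : ℕ∞) (uncurry z))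
    (ht : t ∈ Ioo (0:ℝ) T)
    (hrpos : ∀ α ∈ Icc (0:ℝ) 1, ∀ s ∈ Ico (0:ℝ) T, 0 < r α s)
    (hcpos : ∀ s ∈ Ico (0:ℝ) T, 0 < c s)
    (hequi : ∀ α ∈ Icc (0:ℝ) 1, ∀ s ∈ Ico (0:ℝ) T,
      (deriv (fun a => r a s) α)^2 + (deriv (fun a => z a s) α)^2 = c s)
    (hh : ∀ a, h a = (deriv (fun x => r x t) a * deriv (deriv (fun x => z x t)) a
        - deriv (fun x => z x t) a * deriv (deriv (fun x => r x t)) a)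
        / (2 * ((deriv (fun x => r x t) a)^2 + (deriv (fun x => z x t) a)^2) ^ ((3:ℝ)/2))
      + deriv (fun x => z x t) a
        / (2 * r a t * Real.sqrt ((deriv (fun x => r x t) a)^2 + (deriv (fun x => z x t) a)^2)))
    (hevol : ∀ α ∈ Ioo (0:ℝ) 1,
      deriv (fun a => r a t) α * pt2 z α t - deriv (fun a => z a t) α * pt2 r α t
      = A * Real.sqrt ((deriv (fun a => r a t) α)^2 + (deriv (fun a => z a t) α)^2) * h α)
    (hΦ : Φ = fun a => (r a t * (deriv (fun x => r x t) a * pt2 r a t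
        + deriv (fun x => z x t) a * pt2 z a t)) / Real.sqrt (c t)) :
    HasDerivAt (fun s => ∫ α in (0:ℝ)..1,
        r α s * Real.sqrt ((deriv (fun a => r a s) α)^2 + (deriv (fun a => z a s) α)^2))
      (Φ 1 - Φ 0 - ∫ α in (0:ℝ)..1, 2 * A * r α t * (h α)^2 * Real.sqrt (c t)) t := by
  have htIco : t ∈ Ico (0:ℝ) T := ⟨le_of_lt ht.1, ht.2⟩
  have hct : (0:ℝ) < c t := hcpos t htIco
  set S : ℝ := Real.sqrt (c t) with hSdef
  have hS : 0 < S := Real.sqrt_pos.mpr hct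
  have hS2 : S ^ 2 = c t := Real.sq_sqrt hct.le
  have hρ : ContDiff ℝ ∞ (fun a => r a t) :=
    (hr.of_le (by simp)).comp (contDiff_id.prodMk contDiff_const)
  have hζ : ContDiff ℝ ∞ (fun a => z a t) :=
    (hz.of_le (by simp)).comp (contDiff_id.prodMk contDiff_const)
  have hdρ : ContDiff ℝ ∞ (deriv (fun a => r a t)) := (contDiff_infty_iff_deriv.mp hρ).2
  have hdζ : ContDiff ℝ ∞ (deriv (fun a => z a t)) := (contDiff_infty_iff_deriv.mp hζ).2
  have hddρ : ContDiff ℝ ∞ (deriv (deriv (fun a => r a t))) := (contDiff_infty_iff_deriv.mp hdρ).2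
  have hddζ : ContDiff ℝ ∞ (deriv (deriv (fun a => z a t))) := (contDiff_infty_iff_deriv.mp hdζ).2
  have hσ : ContDiff ℝ ∞ (fun a => pt2 r a t) :=
    ((contDiff_pt2 hr).of_le (by simp)).comp (contDiff_id.prodMk contDiff_const)
  have hτ : ContDiff ℝ ∞ (fun a => pt2 z a t) :=
    ((contDiff_pt2 hz).of_le (by simp)).comp (contDiff_id.prodMk contDiff_const)
  set Dc : ℝ := 2 * (pa2 r 0 t * pt2 (pa2 r) 0 t + pa2 z 0 t * pt2 (pa2 z) 0 t) with hDcdef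
  have hIooNhds : Ioo (0:ℝ) T ∈ 𝓝 t := isOpen_Ioo.mem_nhds ht
  have hcq : ∀ a ∈ Icc (0:ℝ) 1, ∀ s ∈ Ico (0:ℝ) T, c s = (pa2 r a s)^2 + (pa2 z a s)^2 := by
    intro a ha s hs
    rw [← hequi a ha s hs, deriv_fst hr, deriv_fst hz]
  have hDq : ∀ a : ℝ, HasDerivAt (fun s => (pa2 r a s)^2 + (pa2 z a s)^2)
      (2 * (pa2 r a t * pt2 (pa2 r) a t + pa2 z a t * pt2 (pa2 z) a t)) t := by
    intro a
    have h1 := (hasDerivAt_snd (contDiff_pa2 hr) a t).pow 2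
    have h2 := (hasDerivAt_snd (contDiff_pa2 hz) a t).pow 2
    refine (h1.add h2).congr_deriv ?_
    ring
  clear_value Dc
  have hDct : HasDerivAt c Dc t := by
    rw [hDcdef]
    refine (hDq 0).congr_of_eventuallyEq ?_
    filter_upwards [hIooNhds] with s hs
    exact hcq 0 (by norm_num) s ⟨hs.1.le, hs.2⟩
  have hDca : ∀ a ∈ Icc (0:ℝ) 1,
      Dc = 2 * (pa2 r a t * pt2 (pa2 r) a t + pa2 z a t * pt2 (pa2 z) a t) := by
    intro a ha
    have hca : HasDerivAt c (2 * (pa2 r a t * pt2 (pa2 r) a t + pa2 z a t * pt2 (pa2 z) a t)) t := by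
      refine (hDq a).congr_of_eventuallyEq ?_
      filter_upwards [hIooNhds] with s hs
      exact hcq a ha s ⟨hs.1.le, hs.2⟩
    exact hDct.unique hca
  have hIeq : (fun s => ∫ α in (0:ℝ)..1,
      r α s * Real.sqrt ((deriv (fun a => r a s) α)^2 + (deriv (fun a => z a s) α)^2))
      =ᶠ[𝓝 t] fun s => (∫ α in (0:ℝ)..1, r α s) * Real.sqrt (c s) := by
    filter_upwards [hIooNhds] with s hs
    have hsIco : s ∈ Ico (0:ℝ) T := ⟨hs.1.le, hs.2⟩
    rw [← intervalIntegral.integral_mul_const]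
    apply intervalIntegral.integral_congr
    intro α hα
    rw [uIcc_of_le (by norm_num : (0:ℝ) ≤ 1)] at hα
    simp only [hequi α hα s hsIco]
  have hsqc : HasDerivAt (fun s => Real.sqrt (c s)) (Dc / (2 * S)) t := by
    have h0 := (Real.hasDerivAt_sqrt (ne_of_gt hct)).comp t hDct
    have he : Dc / (2 * S) = 1 / (2 * Real.sqrt (c t)) * Dc := by
      rw [hSdef]; ring
    rw [he]; exact h0
  have hIr : HasDerivAt (fun s => ∫ α in (0:ℝ)..1, r α s) (∫ α in (0:ℝ)..1, pt2 r α t) t :=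
    hasDerivAt_param_integral hr t
  have hStageA : HasDerivAt (fun s => ∫ α in (0:ℝ)..1,
      r α s * Real.sqrt ((deriv (fun a => r a s) α)^2 + (deriv (fun a => z a s) α)^2))
      ((∫ α in (0:ℝ)..1, pt2 r α t) * S + (∫ α in (0:ℝ)..1, r α t) * (Dc / (2 * S))) t := by
    exact (hIr.mul hsqc).congr_of_eventuallyEq hIeq
  have h1le : (∞ : WithTop ℕ∞) ≠ 0 := by simp
  set U : Set ℝ := {a | 0 < r a t ∧
      0 < (deriv (fun x => r x t) a)^2 + (deriv (fun x => z x t) a)^2} with hUdef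
  have hUopen : IsOpen U := by
    have h1 : IsOpen {a : ℝ | 0 < r a t} := isOpen_lt continuous_const hρ.continuous
    have h2 : IsOpen {a : ℝ | 0 < (deriv (fun x => r x t) a)^2 + (deriv (fun x => z x t) a)^2} :=
      isOpen_lt continuous_const ((hdρ.continuous.pow 2).add (hdζ.continuous.pow 2))
    exact h1.inter h2
  have hIccU : Icc (0:ℝ) 1 ⊆ U := fun a ha =>
    ⟨hrpos a ha t htIco, by rw [hequi a ha t htIco]; exact hct⟩
  have hhU : ContDiffOn ℝ ∞ h U := by
    intro a ha
    apply ContDiffAt.contDiffWithinAt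
    have hfun : h = fun a => (deriv (fun x => r x t) a * deriv (deriv (fun x => z x t)) a
        - deriv (fun x => z x t) a * deriv (deriv (fun x => r x t)) a)
        / (2 * ((deriv (fun x => r x t) a)^2 + (deriv (fun x => z x t) a)^2) ^ ((3:ℝ)/2))
      + deriv (fun x => z x t) a
        / (2 * r a t * Real.sqrt ((deriv (fun x => r x t) a)^2 + (deriv (fun x => z x t) a)^2)) :=
      funext hh
    rw [hfun]
    have hApos : 0 < (deriv (fun x => r x t) a)^2 + (deriv (fun x => z x t) a)^2 := ha.2
    have hA : ContDiffAt ℝ ∞ (fun x => (deriv (fun y => r y t) x)^2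
        + (deriv (fun y => z y t) x)^2) a :=
      ((hdρ.contDiffAt.pow 2).add (hdζ.contDiffAt.pow 2))
    have hnum : ContDiffAt ℝ ∞ (fun x => deriv (fun y => r y t) x * deriv (deriv (fun y => z y t)) x
        - deriv (fun y => z y t) x * deriv (deriv (fun y => r y t)) x) a :=
      (hdρ.contDiffAt.mul hddζ.contDiffAt).sub (hdζ.contDiffAt.mul hddρ.contDiffAt)
    have hden1 : ContDiffAt ℝ ∞ (fun x => 2 * ((deriv (fun y => r y t) x)^2
        + (deriv (fun y => z y t) x)^2) ^ ((3:ℝ)/2)) a :=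
      contDiffAt_const.mul (hA.rpow_const_of_ne (ne_of_gt hApos))
    have hden1ne : 2 * ((deriv (fun x => r x t) a)^2 + (deriv (fun x => z x t) a)^2) ^ ((3:ℝ)/2)
        ≠ 0 := by positivity
    have hden2 : ContDiffAt ℝ ∞ (fun x => 2 * r x t *
        Real.sqrt ((deriv (fun y => r y t) x)^2 + (deriv (fun y => z y t) x)^2)) a :=
      (contDiffAt_const.mul hρ.contDiffAt).mul (hA.sqrt (ne_of_gt hApos))
    have hden2ne : 2 * r a t *
        Real.sqrt ((deriv (fun x => r x t) a)^2 + (deriv (fun x => z x t) a)^2) ≠ 0 := by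
      have := ha.1
      positivity
    exact (hnum.div hden1 hden1ne).add (hdζ.contDiffAt.div hden2 hden2ne)
  have hconth : ContinuousOn h (Icc (0:ℝ) 1) := (hhU.continuousOn).mono hIccU
  have hcore : ∀ a ∈ Ioo (0:ℝ) 1, HasDerivAt Φ
      (pt2 r a t * S + r a t * (Dc / (2*S)) + 2*A*r a t*(h a)^2*S) a := by
    intro a ha
    have haIcc : a ∈ Icc (0:ℝ) 1 := Ioo_subset_Icc_self ha
    have haU : a ∈ U := hIccU haIcc
    have hP0 : 0 < r a t := haU.1
    have Hρ : HasDerivAt (fun x => r x t) (deriv (fun x => r x t) a) a :=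
      (hρ.differentiable h1le a).hasDerivAt
    have Hζ : HasDerivAt (fun x => z x t) (deriv (fun x => z x t) a) a :=
      (hζ.differentiable h1le a).hasDerivAt
    have Hdρ : HasDerivAt (deriv (fun x => r x t)) (deriv (deriv (fun x => r x t)) a) a :=
      (hdρ.differentiable h1le a).hasDerivAt
    have Hdζ : HasDerivAt (deriv (fun x => z x t)) (deriv (deriv (fun x => z x t)) a) a :=
      (hdζ.differentiable h1le a).hasDerivAt
    have Hσ : HasDerivAt (fun x => pt2 r x t) (deriv (fun x => pt2 r x t) a) a :=
      (hσ.differentiable h1le a).hasDerivAt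
    have Hτ : HasDerivAt (fun x => pt2 z x t) (deriv (fun x => pt2 z x t) a) a :=
      (hτ.differentiable h1le a).hasDerivAt
    set p' := deriv (fun x => r x t) a with hp'
    set q' := deriv (fun x => z x t) a with hq'
    set p'' := deriv (deriv (fun x => r x t)) a with hp''
    set q'' := deriv (deriv (fun x => z x t)) a with hq''
    set P0 := r a t with hP0def
    set s0 := pt2 r a t with hs0
    set u0 := pt2 z a t with hu0
    set s1 := deriv (fun x => pt2 r x t) a with hs1
    set u1 := deriv (fun x => pt2 z x t) a with hu1
    set h0 := h a with hh0
    clear_value p' q' p'' q'' P0 s0 u0 s1 u1 h0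
    have E1 : p'^2 + q'^2 = c t := by
      rw [hp', hq']; exact hequi a haIcc t htIco
    have E2 : 2*p'*p'' + 2*q'*q'' = 0 := by
      have hconst : (fun x => (deriv (fun y => r y t) x)^2 + (deriv (fun y => z y t) x)^2)
          =ᶠ[𝓝 a] (fun _ => c t) := by
        filter_upwards [isOpen_Ioo.mem_nhds ha] with x hx
        exact hequi x (Ioo_subset_Icc_self hx) t htIco
      have hD2 : HasDerivAt (fun x => (deriv (fun y => r y t) x)^2
          + (deriv (fun y => z y t) x)^2) (2*p'*p'' + 2*q'*q'') a := by
        have := (Hdρ.pow 2).add (Hdζ.pow 2)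
        refine this.congr_deriv ?_
        subst hp' hq'
        ring
      have hcderiv : HasDerivAt (fun _ : ℝ => c t) (2*p'*p'' + 2*q'*q'') a :=
        hD2.congr_of_eventuallyEq hconst.symm
      have := (hasDerivAt_const a (c t)).unique hcderiv
      linarith
    have E3 : Dc = 2*(p'*s1 + q'*u1) := by
      have er : pa2 r a t = p' := by rw [hp']; exact ((hasDerivAt_fst hr a t).deriv).symm
      have ez : pa2 z a t = q' := by rw [hq']; exact ((hasDerivAt_fst hz a t).deriv).symm
      have es : pt2 (pa2 r) a t = s1 := by
        rw [hs1, mixed_symm hr a t]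
        exact ((hasDerivAt_fst (contDiff_pt2 hr) a t).deriv).symm
      have eu : pt2 (pa2 z) a t = u1 := by
        rw [hu1, mixed_symm hz a t]
        exact ((hasDerivAt_fst (contDiff_pt2 hz) a t).deriv).symm
      have e := hDca a haIcc
      rw [er, ez, es, eu] at e
      exact e
    have E4 := hevol a ha
    simp only [← hp', ← hq', ← hs0, ← hu0, ← hP0def, ← hh0] at E4
    rw [E1, ← hSdef] at E4
    have E5 := hh a
    have hc32 : (c t) ^ ((3:ℝ)/2) = c t * S := by
      rw [hSdef, show ((3:ℝ)/2) = 1 + 1/2 by norm_num, Real.rpow_add hct, Real.rpow_one,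
        ← Real.sqrt_eq_rpow]
    rw [← hp', ← hq', ← hp'', ← hq'', ← hP0def, ← hh0, E1, hc32, ← hSdef] at E5
    have hSne : S ≠ 0 := ne_of_gt hS
    have hcne : c t ≠ 0 := ne_of_gt hct
    have hP0ne : P0 ≠ 0 := ne_of_gt hP0
    have h5 : h0*(2*(c t)*S*P0) = P0*(p'*q''-q'*p'') + q'*(c t) := by
      rw [E5]
      field_simp
    have hrel : (c t)*(p''*s0+q''*u0) = (p'*q''-q'*p'')*(p'*u0-q'*s0) := by
      have e2 : p'*p'' + q'*q'' = 0 := by linarith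
      calc (c t)*(p''*s0+q''*u0) = (p'^2+q'^2)*(p''*s0+q''*u0) := by rw [E1]
        _ = (p'*p''+q'*q'')*(p'*s0+q'*u0) + (p'*q''-q'*p'')*(p'*u0-q'*s0) := by ring
        _ = (p'*q''-q'*p'')*(p'*u0-q'*s0) := by rw [e2]; ring
    have key : (c t) * (p'*(p'*s0+q'*u0) + P0*(p''*s0+p'*s1+q''*u0+q'*u1))
        = (c t) * (s0*(c t) + P0*(Dc/2) + 2*A*P0*h0^2*(c t)) := by
      have expand : (c t) * (p'*(p'*s0+q'*u0) + P0*(p''*s0+p'*s1+q''*u0+q'*u1))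
          = (c t)*(p'*(p'*s0+q'*u0)) + P0*((c t)*(p''*s0+q''*u0)) + (c t)*P0*(p'*s1+q'*u1) := by
        ring
      rw [expand, hrel, E3]
      linear_combination ((c t)*s0)*E1 + (-(A*S*h0))*h5 + (2*A*(c t)*P0*h0^2)*hS2
        + ((c t)*q' + (p'*q''-q'*p'')*P0)*E4
    have key' := mul_left_cancel₀ (ne_of_gt hct) key
    have T1 := Hρ.mul ((Hdρ.mul Hσ).add (Hdζ.mul Hτ))
    have HΦ := T1.div_const S
    rw [hΦ]
    refine HΦ.congr_deriv (Eq.symm ?_)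
    rw [eq_div_iff (ne_of_gt hS)]
    have lhs_expand : (s0*S + P0*(Dc/(2*S)) + 2*A*P0*h0^2*S)*S
        = s0*S^2 + P0*(Dc/2) + 2*A*P0*h0^2*S^2 := by
      field_simp
    rw [lhs_expand, hS2]
    simp only [Pi.mul_apply, Pi.add_apply, ← hp', ← hq', ← hp'', ← hq'', ← hP0def, ← hs0, ← hu0, ← hs1, ← hu1, ← hh0]
    linear_combination -key'
  have hΦcont : ContinuousOn Φ (Icc (0:ℝ) 1) := by
    rw [hΦ]
    apply ContinuousOn.div_const
    exact (hρ.continuous.continuousOn.mul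
        ((hdρ.continuous.continuousOn.mul hσ.continuous.continuousOn).add
          (hdζ.continuous.continuousOn.mul hτ.continuous.continuousOn)))
  have hIccuIcc : uIcc (0:ℝ) 1 = Icc (0:ℝ) 1 := uIcc_of_le (by norm_num)
  have ibulk : IntervalIntegrable (fun a => 2*A*r a t*(h a)^2*S) volume 0 1 := by
    apply ContinuousOn.intervalIntegrable
    rw [hIccuIcc]
    exact (((continuousOn_const.mul hρ.continuous.continuousOn).mul (hconth.pow 2)).mul
      continuousOn_const)
  have iA : IntervalIntegrable (fun a => pt2 r a t * S) volume 0 1 :=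
    (hσ.continuous.mul continuous_const).intervalIntegrable 0 1
  have iB2 : IntervalIntegrable (fun a => r a t * (Dc/(2*S))) volume 0 1 :=
    (hρ.continuous.mul continuous_const).intervalIntegrable 0 1
  have iP : IntervalIntegrable (fun a => pt2 r a t * S + r a t * (Dc/(2*S))) volume 0 1 :=
    iA.add iB2
  have hFTC : (∫ a in (0:ℝ)..1, (pt2 r a t * S + r a t * (Dc/(2*S))
        + 2*A*r a t*(h a)^2*S)) = Φ 1 - Φ 0 :=
    integral_eq_sub_of_hasDerivAt_of_le (by norm_num) hΦcont hcore (iP.add ibulk)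
  have hsplit : (∫ a in (0:ℝ)..1, (pt2 r a t * S + r a t * (Dc/(2*S))
        + 2*A*r a t*(h a)^2*S))
      = (∫ a in (0:ℝ)..1, pt2 r a t)*S + (∫ a in (0:ℝ)..1, r a t)*(Dc/(2*S))
        + ∫ a in (0:ℝ)..1, 2*A*r a t*(h a)^2*S := by
    rw [integral_add iP ibulk, integral_add iA iB2, intervalIntegral.integral_mul_const, intervalIntegral.integral_mul_const]
  have hval : Φ 1 - Φ 0 - (∫ α in (0:ℝ)..1, 2*A*r α t*(h α)^2*S)
      = (∫ α in (0:ℝ)..1, pt2 r α t)*S + (∫ α in (0:ℝ)..1, r α t)*(Dc/(2*S)) := by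
    rw [← hFTC, hsplit]
    ring
  rw [hval]
  exact hStageA

lemma SD_curve
    (r z : ℝ → ℝ → ℝ) (c : ℝ → ℝ) (h Φ : ℝ → ℝ) (T t B : ℝ)
    (hr : ContDiff ℝ (⊤ : ℕ∞) (uncurry r)) (hz : ContDiff ℝ (⊤ : ℕ∞) (uncurry z))
    (ht : t ∈ Ioo (0:ℝ) T)
    (hrpos : ∀ α ∈ Icc (0:ℝ) 1, ∀ s ∈ Ico (0:ℝ) T, 0 < r α s)
    (hcpos : ∀ s ∈ Ico (0:ℝ) T, 0 < c s)
    (hequi : ∀ α ∈ Icc (0:ℝ) 1, ∀ s ∈ Ico (0:ℝ) T,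
      (deriv (fun a => r a s) α)^2 + (deriv (fun a => z a s) α)^2 = c s)
    (hh : ∀ a, h a = (deriv (fun x => r x t) a * deriv (deriv (fun x => z x t)) a
        - deriv (fun x => z x t) a * deriv (deriv (fun x => r x t)) a)
        / (2 * ((deriv (fun x => r x t) a)^2 + (deriv (fun x => z x t) a)^2) ^ ((3:ℝ)/2))
      + deriv (fun x => z x t) a
        / (2 * r a t * Real.sqrt ((deriv (fun x => r x t) a)^2 + (deriv (fun x => z x t) a)^2)))
    (hevol : ∀ α ∈ Ioo (0:ℝ) 1,
      deriv (fun a => r a t) α * pt2 z α t - deriv (fun a => z a t) α * pt2 r α t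
      = - B * deriv (fun a => r a t * deriv h a) α /
          (r α t * Real.sqrt ((deriv (fun a => r a t) α)^2 + (deriv (fun a => z a t) α)^2)))
    (hΦ : Φ = fun a => (r a t * (deriv (fun x => r x t) a * pt2 r a t
        + deriv (fun x => z x t) a * pt2 z a t)
        + 2 * B * r a t * h a * deriv h a) / Real.sqrt (c t)) :
    HasDerivAt (fun s => ∫ α in (0:ℝ)..1,
        r α s * Real.sqrt ((deriv (fun a => r a s) α)^2 + (deriv (fun a => z a s) α)^2))
      (Φ 1 - Φ 0 - ∫ α in (0:ℝ)..1, 2 * B * r α t * (deriv h α)^2 / Real.sqrt (c t)) t := by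
  have htIco : t ∈ Ico (0:ℝ) T := ⟨le_of_lt ht.1, ht.2⟩
  have hct : (0:ℝ) < c t := hcpos t htIco
  set S : ℝ := Real.sqrt (c t) with hSdef
  have hS : 0 < S := Real.sqrt_pos.mpr hct
  have hS2 : S ^ 2 = c t := Real.sq_sqrt hct.le
  -- one-variable smoothness at time t
  have hρ : ContDiff ℝ ∞ (fun a => r a t) :=
    (hr.of_le (by simp)).comp (contDiff_id.prodMk contDiff_const)
  have hζ : ContDiff ℝ ∞ (fun a => z a t) :=
    (hz.of_le (by simp)).comp (contDiff_id.prodMk contDiff_const)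
  have hdρ : ContDiff ℝ ∞ (deriv (fun a => r a t)) := (contDiff_infty_iff_deriv.mp hρ).2
  have hdζ : ContDiff ℝ ∞ (deriv (fun a => z a t)) := (contDiff_infty_iff_deriv.mp hζ).2
  have hddρ : ContDiff ℝ ∞ (deriv (deriv (fun a => r a t))) := (contDiff_infty_iff_deriv.mp hdρ).2
  have hddζ : ContDiff ℝ ∞ (deriv (deriv (fun a => z a t))) := (contDiff_infty_iff_deriv.mp hdζ).2
  have hσ : ContDiff ℝ ∞ (fun a => pt2 r a t) :=
    ((contDiff_pt2 hr).of_le (by simp)).comp (contDiff_id.prodMk contDiff_const)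
  have hτ : ContDiff ℝ ∞ (fun a => pt2 z a t) :=
    ((contDiff_pt2 hz).of_le (by simp)).comp (contDiff_id.prodMk contDiff_const)
  -- Stage A : differentiate the integral in time
  set Dc : ℝ := 2 * (pa2 r 0 t * pt2 (pa2 r) 0 t + pa2 z 0 t * pt2 (pa2 z) 0 t) with hDcdef
  have hIooNhds : Ioo (0:ℝ) T ∈ 𝓝 t := isOpen_Ioo.mem_nhds ht
  have hcq : ∀ a ∈ Icc (0:ℝ) 1, ∀ s ∈ Ico (0:ℝ) T, c s = (pa2 r a s)^2 + (pa2 z a s)^2 := by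
    intro a ha s hs
    rw [← hequi a ha s hs, deriv_fst hr, deriv_fst hz]
  have hDq : ∀ a : ℝ, HasDerivAt (fun s => (pa2 r a s)^2 + (pa2 z a s)^2)
      (2 * (pa2 r a t * pt2 (pa2 r) a t + pa2 z a t * pt2 (pa2 z) a t)) t := by
    intro a
    have h1 := (hasDerivAt_snd (contDiff_pa2 hr) a t).pow 2
    have h2 := (hasDerivAt_snd (contDiff_pa2 hz) a t).pow 2
    refine (h1.add h2).congr_deriv ?_
    ring
  clear_value Dc
  have hDct : HasDerivAt c Dc t := by
    rw [hDcdef]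
    refine (hDq 0).congr_of_eventuallyEq ?_
    filter_upwards [hIooNhds] with s hs
    exact hcq 0 (by norm_num) s ⟨hs.1.le, hs.2⟩
  have hDca : ∀ a ∈ Icc (0:ℝ) 1,
      Dc = 2 * (pa2 r a t * pt2 (pa2 r) a t + pa2 z a t * pt2 (pa2 z) a t) := by
    intro a ha
    have hca : HasDerivAt c (2 * (pa2 r a t * pt2 (pa2 r) a t + pa2 z a t * pt2 (pa2 z) a t)) t := by
      refine (hDq a).congr_of_eventuallyEq ?_
      filter_upwards [hIooNhds] with s hs
      exact hcq a ha s ⟨hs.1.le, hs.2⟩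
    exact hDct.unique hca
  have hIeq : (fun s => ∫ α in (0:ℝ)..1,
      r α s * Real.sqrt ((deriv (fun a => r a s) α)^2 + (deriv (fun a => z a s) α)^2))
      =ᶠ[𝓝 t] fun s => (∫ α in (0:ℝ)..1, r α s) * Real.sqrt (c s) := by
    filter_upwards [hIooNhds] with s hs
    have hsIco : s ∈ Ico (0:ℝ) T := ⟨hs.1.le, hs.2⟩
    rw [← intervalIntegral.integral_mul_const]
    apply intervalIntegral.integral_congr
    intro α hα
    rw [uIcc_of_le (by norm_num : (0:ℝ) ≤ 1)] at hα
    simp only [hequi α hα s hsIco]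
  have hsqc : HasDerivAt (fun s => Real.sqrt (c s)) (Dc / (2 * S)) t := by
    have h0 := (Real.hasDerivAt_sqrt (ne_of_gt hct)).comp t hDct
    have he : Dc / (2 * S) = 1 / (2 * Real.sqrt (c t)) * Dc := by
      rw [hSdef]; ring
    rw [he]; exact h0
  have hIr : HasDerivAt (fun s => ∫ α in (0:ℝ)..1, r α s) (∫ α in (0:ℝ)..1, pt2 r α t) t :=
    hasDerivAt_param_integral hr t
  have hStageA : HasDerivAt (fun s => ∫ α in (0:ℝ)..1,
      r α s * Real.sqrt ((deriv (fun a => r a s) α)^2 + (deriv (fun a => z a s) α)^2))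
      ((∫ α in (0:ℝ)..1, pt2 r α t) * S + (∫ α in (0:ℝ)..1, r α t) * (Dc / (2 * S))) t := by
    exact (hIr.mul hsqc).congr_of_eventuallyEq hIeq
  -- Stage B : smoothness of h on a neighbourhood of [0,1]
  have h1le : (∞ : WithTop ℕ∞) ≠ 0 := by simp
  set U : Set ℝ := {a | 0 < r a t ∧
      0 < (deriv (fun x => r x t) a)^2 + (deriv (fun x => z x t) a)^2} with hUdef
  have hUopen : IsOpen U := by
    have h1 : IsOpen {a : ℝ | 0 < r a t} := isOpen_lt continuous_const hρ.continuous
    have h2 : IsOpen {a : ℝ | 0 < (deriv (fun x => r x t) a)^2 + (deriv (fun x => z x t) a)^2} :=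
      isOpen_lt continuous_const ((hdρ.continuous.pow 2).add (hdζ.continuous.pow 2))
    exact h1.inter h2
  have hIccU : Icc (0:ℝ) 1 ⊆ U := fun a ha =>
    ⟨hrpos a ha t htIco, by rw [hequi a ha t htIco]; exact hct⟩
  have hhU : ContDiffOn ℝ ∞ h U := by
    intro a ha
    apply ContDiffAt.contDiffWithinAt
    have hfun : h = fun a => (deriv (fun x => r x t) a * deriv (deriv (fun x => z x t)) a
        - deriv (fun x => z x t) a * deriv (deriv (fun x => r x t)) a)
        / (2 * ((deriv (fun x => r x t) a)^2 + (deriv (fun x => z x t) a)^2) ^ ((3:ℝ)/2))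
      + deriv (fun x => z x t) a
        / (2 * r a t * Real.sqrt ((deriv (fun x => r x t) a)^2 + (deriv (fun x => z x t) a)^2)) :=
      funext hh
    rw [hfun]
    have hApos : 0 < (deriv (fun x => r x t) a)^2 + (deriv (fun x => z x t) a)^2 := ha.2
    have hA : ContDiffAt ℝ ∞ (fun x => (deriv (fun y => r y t) x)^2
        + (deriv (fun y => z y t) x)^2) a :=
      ((hdρ.contDiffAt.pow 2).add (hdζ.contDiffAt.pow 2))
    have hnum : ContDiffAt ℝ ∞ (fun x => deriv (fun y => r y t) x * deriv (deriv (fun y => z y t)) x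
        - deriv (fun y => z y t) x * deriv (deriv (fun y => r y t)) x) a :=
      (hdρ.contDiffAt.mul hddζ.contDiffAt).sub (hdζ.contDiffAt.mul hddρ.contDiffAt)
    have hden1 : ContDiffAt ℝ ∞ (fun x => 2 * ((deriv (fun y => r y t) x)^2
        + (deriv (fun y => z y t) x)^2) ^ ((3:ℝ)/2)) a :=
      contDiffAt_const.mul (hA.rpow_const_of_ne (ne_of_gt hApos))
    have hden1ne : 2 * ((deriv (fun x => r x t) a)^2 + (deriv (fun x => z x t) a)^2) ^ ((3:ℝ)/2)
        ≠ 0 := by positivity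
    have hden2 : ContDiffAt ℝ ∞ (fun x => 2 * r x t *
        Real.sqrt ((deriv (fun y => r y t) x)^2 + (deriv (fun y => z y t) x)^2)) a :=
      (contDiffAt_const.mul hρ.contDiffAt).mul (hA.sqrt (ne_of_gt hApos))
    have hden2ne : 2 * r a t *
        Real.sqrt ((deriv (fun x => r x t) a)^2 + (deriv (fun x => z x t) a)^2) ≠ 0 := by
      have := ha.1
      positivity
    exact (hnum.div hden1 hden1ne).add (hdζ.contDiffAt.div hden2 hden2ne)
  have hdhU : ContDiffOn ℝ ∞ (deriv h) U := hhU.deriv_of_isOpen hUopen (by simp)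
  have hd2hU : ContDiffOn ℝ ∞ (deriv (deriv h)) U := hdhU.deriv_of_isOpen hUopen (by simp)
  have hdiffh : ∀ a ∈ U, HasDerivAt h (deriv h a) a := fun a ha =>
    (((hhU a ha).contDiffAt (hUopen.mem_nhds ha)).differentiableAt h1le).hasDerivAt
  have hdiffdh : ∀ a ∈ U, HasDerivAt (deriv h) (deriv (deriv h) a) a := fun a ha =>
    (((hdhU a ha).contDiffAt (hUopen.mem_nhds ha)).differentiableAt h1le).hasDerivAt
  have hconth : ContinuousOn h (Icc (0:ℝ) 1) := (hhU.continuousOn).mono hIccU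
  have hcontdh : ContinuousOn (deriv h) (Icc (0:ℝ) 1) := (hdhU.continuousOn).mono hIccU
  -- the core pointwise identity
  have hcore : ∀ a ∈ Ioo (0:ℝ) 1, HasDerivAt Φ
      (pt2 r a t * S + r a t * (Dc / (2*S)) + 2*B*r a t*(deriv h a)^2/S) a := by
    intro a ha
    have haIcc : a ∈ Icc (0:ℝ) 1 := Ioo_subset_Icc_self ha
    have haU : a ∈ U := hIccU haIcc
    have hP0 : 0 < r a t := haU.1
    have Hρ : HasDerivAt (fun x => r x t) (deriv (fun x => r x t) a) a :=
      (hρ.differentiable h1le a).hasDerivAt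
    have Hζ : HasDerivAt (fun x => z x t) (deriv (fun x => z x t) a) a :=
      (hζ.differentiable h1le a).hasDerivAt
    have Hdρ : HasDerivAt (deriv (fun x => r x t)) (deriv (deriv (fun x => r x t)) a) a :=
      (hdρ.differentiable h1le a).hasDerivAt
    have Hdζ : HasDerivAt (deriv (fun x => z x t)) (deriv (deriv (fun x => z x t)) a) a :=
      (hdζ.differentiable h1le a).hasDerivAt
    have Hσ : HasDerivAt (fun x => pt2 r x t) (deriv (fun x => pt2 r x t) a) a :=
      (hσ.differentiable h1le a).hasDerivAt
    have Hτ : HasDerivAt (fun x => pt2 z x t) (deriv (fun x => pt2 z x t) a) a :=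
      (hτ.differentiable h1le a).hasDerivAt
    have Hh : HasDerivAt h (deriv h a) a := hdiffh a haU
    have Hdh : HasDerivAt (deriv h) (deriv (deriv h) a) a := hdiffdh a haU
    -- abbreviations
    set p' := deriv (fun x => r x t) a with hp'
    set q' := deriv (fun x => z x t) a with hq'
    set p'' := deriv (deriv (fun x => r x t)) a with hp''
    set q'' := deriv (deriv (fun x => z x t)) a with hq''
    set P0 := r a t with hP0def
    set s0 := pt2 r a t with hs0
    set u0 := pt2 z a t with hu0
    set s1 := deriv (fun x => pt2 r x t) a with hs1
    set u1 := deriv (fun x => pt2 z x t) a with hu1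
    set h0 := h a with hh0
    set h1 := deriv h a with hh1
    set h2 := deriv (deriv h) a with hh2
    clear_value p' q' p'' q'' P0 s0 u0 s1 u1 h0 h1 h2
    -- facts E1-E5
    have E1 : p'^2 + q'^2 = c t := by
      rw [hp', hq']; exact hequi a haIcc t htIco
    have E2 : 2*p'*p'' + 2*q'*q'' = 0 := by
      have hconst : (fun x => (deriv (fun y => r y t) x)^2 + (deriv (fun y => z y t) x)^2)
          =ᶠ[𝓝 a] (fun _ => c t) := by
        filter_upwards [isOpen_Ioo.mem_nhds ha] with x hx
        exact hequi x (Ioo_subset_Icc_self hx) t htIco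
      have hD2 : HasDerivAt (fun x => (deriv (fun y => r y t) x)^2
          + (deriv (fun y => z y t) x)^2) (2*p'*p'' + 2*q'*q'') a := by
        have := (Hdρ.pow 2).add (Hdζ.pow 2)
        refine this.congr_deriv ?_
        subst hp' hq'
        ring
      have hcderiv : HasDerivAt (fun _ : ℝ => c t) (2*p'*p'' + 2*q'*q'') a :=
        hD2.congr_of_eventuallyEq hconst.symm
      have := (hasDerivAt_const a (c t)).unique hcderiv
      linarith
    have E3 : Dc = 2*(p'*s1 + q'*u1) := by
      have er : pa2 r a t = p' := by rw [hp']; exact ((hasDerivAt_fst hr a t).deriv).symm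
      have ez : pa2 z a t = q' := by rw [hq']; exact ((hasDerivAt_fst hz a t).deriv).symm
      have es : pt2 (pa2 r) a t = s1 := by
        rw [hs1, mixed_symm hr a t]
        exact ((hasDerivAt_fst (contDiff_pt2 hr) a t).deriv).symm
      have eu : pt2 (pa2 z) a t = u1 := by
        rw [hu1, mixed_symm hz a t]
        exact ((hasDerivAt_fst (contDiff_pt2 hz) a t).deriv).symm
      have e := hDca a haIcc
      rw [er, ez, es, eu] at e
      exact e
    have E4 := hevol a ha
    simp only [← hp', ← hq', ← hs0, ← hu0, ← hP0def] at E4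
    have hX : deriv (fun x => r x t * deriv h x) a = p'*h1 + P0*h2 := by
      rw [HasDerivAt.deriv (f := fun x => r x t * deriv h x) (Hρ.mul Hdh)]
      simp only [← hh1, ← hP0def]
    rw [hX, E1, ← hSdef] at E4
    have E5 := hh a
    have hc32 : (c t) ^ ((3:ℝ)/2) = c t * S := by
      rw [hSdef, show ((3:ℝ)/2) = 1 + 1/2 by norm_num, Real.rpow_add hct, Real.rpow_one,
        ← Real.sqrt_eq_rpow]
    rw [← hp', ← hq', ← hp'', ← hq'', ← hP0def, ← hh0, E1, hc32, ← hSdef] at E5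
    have hSne : S ≠ 0 := ne_of_gt hS
    have hcne : c t ≠ 0 := ne_of_gt hct
    have hP0ne : P0 ≠ 0 := ne_of_gt hP0
    have hw : B*(p'*h1+P0*h2) = -((p'*u0 - q'*s0)*(P0*S)) := by
      have hPS : P0*S ≠ 0 := mul_ne_zero hP0ne hSne
      field_simp at E4
      linarith
    have h5 : h0*(2*(c t)*S*P0) = P0*(p'*q''-q'*p'') + q'*(c t) := by
      rw [E5]
      field_simp
    have hrel : (c t)*(p''*s0+q''*u0) = (p'*q''-q'*p'')*(p'*u0-q'*s0) := by
      have e2 : p'*p'' + q'*q'' = 0 := by linarith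
      calc (c t)*(p''*s0+q''*u0) = (p'^2+q'^2)*(p''*s0+q''*u0) := by rw [E1]
        _ = (p'*p''+q'*q'')*(p'*s0+q'*u0) + (p'*q''-q'*p'')*(p'*u0-q'*s0) := by ring
        _ = (p'*q''-q'*p'')*(p'*u0-q'*s0) := by rw [e2]; ring
    have key : (c t) * (p'*(p'*s0+q'*u0) + P0*(p''*s0+p'*s1+q''*u0+q'*u1)
          + 2*B*(p'*h0*h1 + P0*h1^2 + P0*h0*h2))
        = (c t) * (s0*(c t) + P0*(Dc/2) + 2*B*P0*h1^2) := by
      have expand : (c t) * (p'*(p'*s0+q'*u0) + P0*(p''*s0+p'*s1+q''*u0+q'*u1)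
            + 2*B*(p'*h0*h1 + P0*h1^2 + P0*h0*h2))
          = (c t)*(p'*(p'*s0+q'*u0)) + P0*((c t)*(p''*s0+q''*u0)) + (c t)*P0*(p'*s1+q'*u1)
            + 2*h0*(c t)*(B*(p'*h1+P0*h2)) + (c t)*(2*B*P0*h1^2) := by ring
      rw [expand, hrel, hw, E3]
      linear_combination (-(p'*u0-q'*s0))*h5 + (c t)*s0*E1
    have key' := mul_left_cancel₀ hcne key
    -- build the derivative of Φ
    have T1 := Hρ.mul ((Hdρ.mul Hσ).add (Hdζ.mul Hτ))
    have T2 := ((Hρ.const_mul (2*B)).mul Hh).mul Hdh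
    have HΦ := (T1.add T2).div_const S
    rw [hΦ]
    refine HΦ.congr_deriv (Eq.symm ?_)
    rw [eq_div_iff hSne]
    have lhs_expand : (s0*S + P0*(Dc/(2*S)) + 2*B*P0*h1^2/S)*S
        = s0*S^2 + P0*(Dc/2) + 2*B*P0*h1^2 := by
      field_simp
    rw [lhs_expand, hS2]
    simp only [Pi.mul_apply, Pi.add_apply, ← hp', ← hq', ← hp'', ← hq'', ← hP0def, ← hs0, ← hu0, ← hs1, ← hu1,
      ← hh0, ← hh1, ← hh2]
    linear_combination -key'
  -- continuity and integrability
  have hΦcont : ContinuousOn Φ (Icc (0:ℝ) 1) := by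
    rw [hΦ]
    apply ContinuousOn.div_const
    exact ((hρ.continuous.continuousOn.mul
        ((hdρ.continuous.continuousOn.mul hσ.continuous.continuousOn).add
          (hdζ.continuous.continuousOn.mul hτ.continuous.continuousOn))).add
      (((continuousOn_const.mul hρ.continuous.continuousOn).mul hconth).mul hcontdh))
  have hIccuIcc : uIcc (0:ℝ) 1 = Icc (0:ℝ) 1 := uIcc_of_le (by norm_num)
  have ibulk : IntervalIntegrable (fun a => 2*B*r a t*(deriv h a)^2/S) volume 0 1 := by
    apply ContinuousOn.intervalIntegrable
    rw [hIccuIcc]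
    exact ((continuousOn_const.mul hρ.continuous.continuousOn).mul (hcontdh.pow 2)).div_const S
  have iA : IntervalIntegrable (fun a => pt2 r a t * S) volume 0 1 :=
    (hσ.continuous.mul continuous_const).intervalIntegrable 0 1
  have iB2 : IntervalIntegrable (fun a => r a t * (Dc/(2*S))) volume 0 1 :=
    (hρ.continuous.mul continuous_const).intervalIntegrable 0 1
  have iP : IntervalIntegrable (fun a => pt2 r a t * S + r a t * (Dc/(2*S))) volume 0 1 :=
    iA.add iB2
  have hFTC : (∫ a in (0:ℝ)..1, (pt2 r a t * S + r a t * (Dc/(2*S))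
        + 2*B*r a t*(deriv h a)^2/S)) = Φ 1 - Φ 0 :=
    integral_eq_sub_of_hasDerivAt_of_le (by norm_num) hΦcont hcore (iP.add ibulk)
  have hsplit : (∫ a in (0:ℝ)..1, (pt2 r a t * S + r a t * (Dc/(2*S))
        + 2*B*r a t*(deriv h a)^2/S))
      = (∫ a in (0:ℝ)..1, pt2 r a t)*S + (∫ a in (0:ℝ)..1, r a t)*(Dc/(2*S))
        + ∫ a in (0:ℝ)..1, 2*B*r a t*(deriv h a)^2/S := by
    rw [integral_add iP ibulk, integral_add iA iB2, intervalIntegral.integral_mul_const, intervalIntegral.integral_mul_const]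
  have hval : Φ 1 - Φ 0 - (∫ α in (0:ℝ)..1, 2*B*r α t*(deriv h α)^2/S)
      = (∫ α in (0:ℝ)..1, pt2 r α t)*S + (∫ α in (0:ℝ)..1, r α t)*(Dc/(2*S)) := by
    rw [← hFTC, hsplit]
    ring
  rw [hval]
  exact hStageA


end EDissip

open EDissip Set Function Filter Topology intervalIntegral MeasureTheory

/-- Energy dissipation for the axisymmetric two-grain system: the exterior surfaces
(i = 0, 1) evolve by surface diffusion and the grain boundary (i = 2) by mean
curvature motion; the total free energy decays at the stated rate. -/
theorem energy_dissipation
    (T B Acoef γex γgb γgas γgrs m θc : ℝ)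
    (hT : 0 < T) (hB : 0 < B) (hAcoef : 0 < Acoef)
    (hγex : 0 < γex) (hγgb : 0 ≤ γgb) (hm : m = γgb / γex)
    (r z H : Fin 3 → ℝ → ℝ → ℝ) (c : Fin 3 → ℝ → ℝ)
    (hr_smooth : ∀ i, ContDiff ℝ (⊤ : ℕ∞) (Function.uncurry (r i)))
    (hz_smooth : ∀ i, ContDiff ℝ (⊤ : ℕ∞) (Function.uncurry (z i)))
    (hr_pos : ∀ i, ∀ α ∈ Set.Icc (0:ℝ) 1, ∀ t ∈ Set.Ico (0:ℝ) T, 0 < r i α t)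
    (hc_pos : ∀ i, ∀ t ∈ Set.Ico (0:ℝ) T, 0 < c i t)
    (hequi : ∀ i, ∀ α ∈ Set.Icc (0:ℝ) 1, ∀ t ∈ Set.Ico (0:ℝ) T,
      (deriv (fun a => r i a t) α) ^ 2 + (deriv (fun a => z i a t) α) ^ 2 = c i t)
    (hH : ∀ i α t, H i α t =
      (deriv (fun a => r i a t) α * deriv (deriv (fun a => z i a t)) α
        - deriv (fun a => z i a t) α * deriv (deriv (fun a => r i a t)) α)
        / (2 * ((deriv (fun a => r i a t) α) ^ 2 + (deriv (fun a => z i a t) α) ^ 2)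
            ^ ((3:ℝ)/2))
      + deriv (fun a => z i a t) α
        / (2 * r i α t *
            Real.sqrt ((deriv (fun a => r i a t) α) ^ 2 + (deriv (fun a => z i a t) α) ^ 2)))
    -- (a) surface diffusion for the exterior surfaces i = 0, 1
    (hevolSD : ∀ i : Fin 3, i ≠ 2 → ∀ α ∈ Set.Ioo (0:ℝ) 1, ∀ t ∈ Set.Ioo (0:ℝ) T,
      deriv (fun a => r i a t) α * deriv (fun s => z i α s) t
        - deriv (fun a => z i a t) α * deriv (fun s => r i α s) t
      = - B * deriv (fun a => r i a t * deriv (fun b => H i b t) a) α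
          / (r i α t *
              Real.sqrt ((deriv (fun a => r i a t) α) ^ 2 + (deriv (fun a => z i a t) α) ^ 2)))
    -- (a) mean curvature motion for the grain boundary i = 2
    (hevolMC : ∀ α ∈ Set.Ioo (0:ℝ) 1, ∀ t ∈ Set.Ioo (0:ℝ) T,
      deriv (fun a => r 2 a t) α * deriv (fun s => z 2 α s) t
        - deriv (fun a => z 2 a t) α * deriv (fun s => r 2 α s) t
      = Acoef * Real.sqrt ((deriv (fun a => r 2 a t) α) ^ 2
          + (deriv (fun a => z 2 a t) α) ^ 2) * H 2 α t)
    -- (b) endpoint conditions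
    (hbc1 : ∀ t ∈ Set.Ico (0:ℝ) T, z 0 0 t = 0)
    (hbc2 : ∀ t ∈ Set.Ico (0:ℝ) T, z 2 0 t = 0)
    (hbc3 : ∀ t ∈ Set.Ico (0:ℝ) T, deriv (fun a => r 2 a t) 0 = 0)
    (hbc4 : ∀ t ∈ Set.Ico (0:ℝ) T, r 1 1 t = 1)
    (hbc5 : ∀ t ∈ Set.Ico (0:ℝ) T, deriv (fun a => z 1 a t) 1 = 0)
    (hbc6 : ∀ t ∈ Set.Ico (0:ℝ) T,
      r 0 1 t = r 1 0 t ∧ z 0 1 t = z 1 0 t ∧ r 1 0 t = r 2 1 t ∧ z 1 0 t = z 2 1 t)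
    -- (c) Herring force balance at the triple junction
    (hHerring : ∀ t ∈ Set.Ico (0:ℝ) T,
      deriv (fun a => r 0 a t) 1 / Real.sqrt (c 0 t)
        + m * (deriv (fun a => r 2 a t) 1 / Real.sqrt (c 2 t))
        = deriv (fun a => r 1 a t) 0 / Real.sqrt (c 1 t)
      ∧ deriv (fun a => z 0 a t) 1 / Real.sqrt (c 0 t)
        + m * (deriv (fun a => z 2 a t) 1 / Real.sqrt (c 2 t))
        = deriv (fun a => z 1 a t) 0 / Real.sqrt (c 1 t))
    -- (d) contact angle at the substrate
    (hθc : ∀ t ∈ Set.Ico (0:ℝ) T,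
      deriv (fun a => r 0 a t) 0 / Real.sqrt (c 0 t) = Real.cos θc)
    -- (e) continuity of the chemical potential
    (hchem : ∀ t ∈ Set.Ico (0:ℝ) T, H 0 1 t = H 1 0 t)
    -- (f) mass flux conditions
    (hflux0 : ∀ t ∈ Set.Ico (0:ℝ) T, deriv (fun a => H 0 a t) 0 = 0)
    (hflux1 : ∀ t ∈ Set.Ico (0:ℝ) T, deriv (fun a => H 1 a t) 1 = 0)
    (hfluxJ : ∀ t ∈ Set.Ico (0:ℝ) T,
      deriv (fun a => H 0 a t) 1 / Real.sqrt (c 0 t)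
        = deriv (fun a => H 1 a t) 0 / Real.sqrt (c 1 t))
    -- the total free energy
    (E : ℝ → ℝ)
    (hE : ∀ t, E t = Real.pi * γgrs
      + γex * (2 * Real.pi *
          ((∫ α in (0:ℝ)..1, r 0 α t *
              Real.sqrt ((deriv (fun a => r 0 a t) α) ^ 2 + (deriv (fun a => z 0 a t) α) ^ 2))
            + ∫ α in (0:ℝ)..1, r 1 α t *
              Real.sqrt ((deriv (fun a => r 1 a t) α) ^ 2 + (deriv (fun a => z 1 a t) α) ^ 2))
          + Real.pi * Real.cos θc * (r 0 0 t) ^ 2)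
      + γgb * (2 * Real.pi * ∫ α in (0:ℝ)..1, r 2 α t *
          Real.sqrt ((deriv (fun a => r 2 a t) α) ^ 2 + (deriv (fun a => z 2 a t) α) ^ 2))) :
    ∀ t ∈ Set.Ioo (0:ℝ) T,
      deriv E t
        = -4 * Real.pi *
            (γex * ((∫ α in (0:ℝ)..1,
                  B * r 0 α t * (deriv (fun a => H 0 a t) α) ^ 2 / Real.sqrt (c 0 t))
                + ∫ α in (0:ℝ)..1,
                  B * r 1 α t * (deriv (fun a => H 1 a t) α) ^ 2 / Real.sqrt (c 1 t))
              + γgb * ∫ α in (0:ℝ)..1,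
                  Acoef * r 2 α t * (H 2 α t) ^ 2 * Real.sqrt (c 2 t))
      ∧ deriv E t ≤ 0 := by
  intro t ht
  have htIco : t ∈ Set.Ico (0:ℝ) T := ⟨ht.1.le, ht.2⟩
  have hIooNhds : Set.Ioo (0:ℝ) T ∈ 𝓝 t := isOpen_Ioo.mem_nhds ht
  -- generic time-derivative facts from boundary conditions
  have hconsteq : ∀ (f : ℝ → ℝ → ℝ), ContDiff ℝ (⊤ : ℕ∞) (uncurry f) → ∀ (α k : ℝ),
      (∀ s ∈ Set.Ico (0:ℝ) T, f α s = k) → pt2 f α t = 0 := by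
    intro f hf α k hfk
    have hek : HasDerivAt (fun _ : ℝ => k) (pt2 f α t) t := by
      refine (hasDerivAt_snd hf α t).congr_of_eventuallyEq ?_
      filter_upwards [hIooNhds] with s hs
      exact (hfk s ⟨hs.1.le, hs.2⟩).symm
    exact hek.unique (hasDerivAt_const t k)
  have hdeq : ∀ (f g : ℝ → ℝ → ℝ), ContDiff ℝ (⊤ : ℕ∞) (uncurry f) → ContDiff ℝ (⊤ : ℕ∞) (uncurry g) →
      ∀ (α β : ℝ), (∀ s ∈ Set.Ico (0:ℝ) T, f α s = g β s) → pt2 f α t = pt2 g β t := by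
    intro f g hf hg α β hfg
    refine (hasDerivAt_snd hf α t).unique ?_
    refine (hasDerivAt_snd hg β t).congr_of_eventuallyEq ?_
    filter_upwards [hIooNhds] with s hs
    exact hfg s ⟨hs.1.le, hs.2⟩
  have zt00 : pt2 (z 0) 0 t = 0 := hconsteq (z 0) (hz_smooth 0) 0 0 hbc1
  have zt20 : pt2 (z 2) 0 t = 0 := hconsteq (z 2) (hz_smooth 2) 0 0 hbc2
  have rt11 : pt2 (r 1) 1 t = 0 := hconsteq (r 1) (hr_smooth 1) 1 1 hbc4
  have hR01 : pt2 (r 0) 1 t = pt2 (r 1) 0 t :=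
    hdeq (r 0) (r 1) (hr_smooth 0) (hr_smooth 1) 1 0 (fun s hs => (hbc6 s hs).1)
  have hR12 : pt2 (r 1) 0 t = pt2 (r 2) 1 t :=
    hdeq (r 1) (r 2) (hr_smooth 1) (hr_smooth 2) 0 1 (fun s hs => (hbc6 s hs).2.2.1)
  have hZ01 : pt2 (z 0) 1 t = pt2 (z 1) 0 t :=
    hdeq (z 0) (z 1) (hz_smooth 0) (hz_smooth 1) 1 0 (fun s hs => (hbc6 s hs).2.1)
  have hZ12 : pt2 (z 1) 0 t = pt2 (z 2) 1 t :=
    hdeq (z 1) (z 2) (hz_smooth 1) (hz_smooth 2) 0 1 (fun s hs => (hbc6 s hs).2.2.2)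
  -- the Φ functions
  set Φ0 : ℝ → ℝ := fun a => (r 0 a t * (deriv (fun x => r 0 x t) a * pt2 (r 0) a t
      + deriv (fun x => z 0 x t) a * pt2 (z 0) a t)
      + 2 * B * r 0 a t * H 0 a t * deriv (fun b => H 0 b t) a) / Real.sqrt (c 0 t) with hΦ0
  set Φ1 : ℝ → ℝ := fun a => (r 1 a t * (deriv (fun x => r 1 x t) a * pt2 (r 1) a t
      + deriv (fun x => z 1 x t) a * pt2 (z 1) a t)
      + 2 * B * r 1 a t * H 1 a t * deriv (fun b => H 1 b t) a) / Real.sqrt (c 1 t) with hΦ1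
  set Φ2 : ℝ → ℝ := fun a => (r 2 a t * (deriv (fun x => r 2 x t) a * pt2 (r 2) a t
      + deriv (fun x => z 2 x t) a * pt2 (z 2) a t)) / Real.sqrt (c 2 t) with hΦ2
  -- evolution equations in pt2 form
  have evol0 : ∀ α ∈ Set.Ioo (0:ℝ) 1,
      deriv (fun a => r 0 a t) α * pt2 (z 0) α t - deriv (fun a => z 0 a t) α * pt2 (r 0) α t
      = - B * deriv (fun a => r 0 a t * deriv (fun b => H 0 b t) a) α /
          (r 0 α t * Real.sqrt ((deriv (fun a => r 0 a t) α)^2 + (deriv (fun a => z 0 a t) α)^2)) := by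
    intro α hα
    have h := hevolSD 0 (by decide) α hα t ht
    rw [show deriv (fun s => z 0 α s) t = pt2 (z 0) α t from (hasDerivAt_snd (hz_smooth 0) α t).deriv,
      show deriv (fun s => r 0 α s) t = pt2 (r 0) α t from (hasDerivAt_snd (hr_smooth 0) α t).deriv] at h
    exact h
  have evol1 : ∀ α ∈ Set.Ioo (0:ℝ) 1,
      deriv (fun a => r 1 a t) α * pt2 (z 1) α t - deriv (fun a => z 1 a t) α * pt2 (r 1) α t
      = - B * deriv (fun a => r 1 a t * deriv (fun b => H 1 b t) a) α /
          (r 1 α t * Real.sqrt ((deriv (fun a => r 1 a t) α)^2 + (deriv (fun a => z 1 a t) α)^2)) := by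
    intro α hα
    have h := hevolSD 1 (by decide) α hα t ht
    rw [show deriv (fun s => z 1 α s) t = pt2 (z 1) α t from (hasDerivAt_snd (hz_smooth 1) α t).deriv,
      show deriv (fun s => r 1 α s) t = pt2 (r 1) α t from (hasDerivAt_snd (hr_smooth 1) α t).deriv] at h
    exact h
  have evol2 : ∀ α ∈ Set.Ioo (0:ℝ) 1,
      deriv (fun a => r 2 a t) α * pt2 (z 2) α t - deriv (fun a => z 2 a t) α * pt2 (r 2) α t
      = Acoef * Real.sqrt ((deriv (fun a => r 2 a t) α)^2 + (deriv (fun a => z 2 a t) α)^2)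
          * H 2 α t := by
    intro α hα
    have h := hevolMC α hα t ht
    rw [show deriv (fun s => z 2 α s) t = pt2 (z 2) α t from (hasDerivAt_snd (hz_smooth 2) α t).deriv,
      show deriv (fun s => r 2 α s) t = pt2 (r 2) α t from (hasDerivAt_snd (hr_smooth 2) α t).deriv] at h
    exact h
  have hSD0 := SD_curve (r 0) (z 0) (c 0) (fun b => H 0 b t) Φ0 T t B
    (hr_smooth 0) (hz_smooth 0) ht (hr_pos 0) (hc_pos 0) (hequi 0)
    (fun a => hH 0 a t) evol0 hΦ0
  have hSD1 := SD_curve (r 1) (z 1) (c 1) (fun b => H 1 b t) Φ1 T t B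
    (hr_smooth 1) (hz_smooth 1) ht (hr_pos 1) (hc_pos 1) (hequi 1)
    (fun a => hH 1 a t) evol1 hΦ1
  have hSD2 := MC_curve (r 2) (z 2) (c 2) (fun b => H 2 b t) Φ2 T t Acoef
    (hr_smooth 2) (hz_smooth 2) ht (hr_pos 2) (hc_pos 2) (hequi 2)
    (fun a => hH 2 a t) evol2 hΦ2
  -- rewrite the bulk integrals as twice the target integrals
  have hbulk0 : (∫ α in (0:ℝ)..1, 2*B*r 0 α t*(deriv (fun b => H 0 b t) α)^2/Real.sqrt (c 0 t))
      = 2 * ∫ α in (0:ℝ)..1, B * r 0 α t * (deriv (fun a => H 0 a t) α)^2 / Real.sqrt (c 0 t) := by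
    rw [← intervalIntegral.integral_const_mul]
    apply intervalIntegral.integral_congr
    intro α _
    ring
  have hbulk1 : (∫ α in (0:ℝ)..1, 2*B*r 1 α t*(deriv (fun b => H 1 b t) α)^2/Real.sqrt (c 1 t))
      = 2 * ∫ α in (0:ℝ)..1, B * r 1 α t * (deriv (fun a => H 1 a t) α)^2 / Real.sqrt (c 1 t) := by
    rw [← intervalIntegral.integral_const_mul]
    apply intervalIntegral.integral_congr
    intro α _
    ring
  have hbulk2 : (∫ α in (0:ℝ)..1, 2*Acoef*r 2 α t*((fun b => H 2 b t) α)^2*Real.sqrt (c 2 t))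
      = 2 * ∫ α in (0:ℝ)..1, Acoef * r 2 α t * (H 2 α t)^2 * Real.sqrt (c 2 t) := by
    rw [← intervalIntegral.integral_const_mul]
    apply intervalIntegral.integral_congr
    intro α _
    ring
  rw [hbulk0] at hSD0
  rw [hbulk1] at hSD1
  rw [hbulk2] at hSD2
  -- boundary values of Φ
  have hS0 : (0:ℝ) < Real.sqrt (c 0 t) := Real.sqrt_pos.mpr (hc_pos 0 t htIco)
  have hS1 : (0:ℝ) < Real.sqrt (c 1 t) := Real.sqrt_pos.mpr (hc_pos 1 t htIco)
  have hS2' : (0:ℝ) < Real.sqrt (c 2 t) := Real.sqrt_pos.mpr (hc_pos 2 t htIco)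
  have hΦ11 : Φ1 1 = 0 := by
    rw [hΦ1]
    simp [rt11, hbc5 t htIco, hflux1 t htIco]
  have hΦ20 : Φ2 0 = 0 := by
    rw [hΦ2]
    simp [zt20, hbc3 t htIco]
  have hp00 : deriv (fun a => r 0 a t) 0 = Real.cos θc * Real.sqrt (c 0 t) := by
    have h := hθc t htIco
    rw [div_eq_iff (ne_of_gt hS0)] at h
    exact h
  have hΦ00 : Φ0 0 = Real.cos θc * (r 0 0 t * pt2 (r 0) 0 t) := by
    rw [hΦ0]
    simp only [zt00, hflux0 t htIco, hp00, mul_zero, add_zero, zero_mul]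
    field_simp
  have hgbm : γgb = m * γex := by
    rw [hm]
    field_simp
  have hJ : γex * (Φ0 1 - Φ1 0) + γgb * Φ2 1 = 0 := by
    have hb6 := hbc6 t htIco
    have hHr := (hHerring t htIco).1
    have hHz := (hHerring t htIco).2
    have hfJ := hfluxJ t htIco
    have hch := hchem t htIco
    rw [hΦ0, hΦ1, hΦ2]
    simp only
    rw [← hb6.1] at *
    rw [← hR01, ← hZ01, ← hch]
    rw [show r 2 1 t = r 0 1 t from (hb6.1 ▸ hb6.2.2.1).symm]
    rw [show pt2 (r 2) 1 t = pt2 (r 0) 1 t from (hR01.trans hR12).symm]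
    rw [show pt2 (z 2) 1 t = pt2 (z 0) 1 t from (hZ01.trans hZ12).symm]
    linear_combination (γex * (r 0 1 t) * pt2 (r 0) 1 t) * hHr
      + (γex * (r 0 1 t) * pt2 (z 0) 1 t) * hHz
      + (2*B*γex*(r 0 1 t)*(H 0 1 t)) * hfJ
      + ((r 0 1 t)*(deriv (fun x => r 2 x t) 1 * pt2 (r 0) 1 t
          + deriv (fun x => z 2 x t) 1 * pt2 (z 0) 1 t)/Real.sqrt (c 2 t)) * hgbm
  -- derivative of the contact-line term
  have hr00sq : HasDerivAt (fun s => (r 0 0 s)^2) (2*(r 0 0 t)*pt2 (r 0) 0 t) t := by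
    have h := (hasDerivAt_snd (hr_smooth 0) 0 t).pow 2
    exact h.congr_deriv (by rw [show (2:ℕ) - 1 = 1 from rfl]; push_cast; ring)
  -- assemble the derivative of E
  have hEfun : E = fun s => Real.pi * γgrs
      + γex * (2 * Real.pi *
          ((∫ α in (0:ℝ)..1, r 0 α s *
              Real.sqrt ((deriv (fun a => r 0 a s) α) ^ 2 + (deriv (fun a => z 0 a s) α) ^ 2))
            + ∫ α in (0:ℝ)..1, r 1 α s *
              Real.sqrt ((deriv (fun a => r 1 a s) α) ^ 2 + (deriv (fun a => z 1 a s) α) ^ 2))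
          + Real.pi * Real.cos θc * (r 0 0 s) ^ 2)
      + γgb * (2 * Real.pi * ∫ α in (0:ℝ)..1, r 2 α s *
          Real.sqrt ((deriv (fun a => r 2 a s) α) ^ 2 + (deriv (fun a => z 2 a s) α) ^ 2)) :=
    funext hE
  set K0 : ℝ := ∫ α in (0:ℝ)..1, B * r 0 α t * (deriv (fun a => H 0 a t) α)^2 / Real.sqrt (c 0 t)
    with hK0def
  set K1 : ℝ := ∫ α in (0:ℝ)..1, B * r 1 α t * (deriv (fun a => H 1 a t) α)^2 / Real.sqrt (c 1 t)
    with hK1def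
  set K2 : ℝ := ∫ α in (0:ℝ)..1, Acoef * r 2 α t * (H 2 α t)^2 * Real.sqrt (c 2 t) with hK2def
  have hEd : HasDerivAt E
      (γex * (2 * Real.pi * ((Φ0 1 - Φ0 0 - 2*K0) + (Φ1 1 - Φ1 0 - 2*K1))
          + Real.pi * Real.cos θc * (2*(r 0 0 t)*pt2 (r 0) 0 t))
        + γgb * (2 * Real.pi * (Φ2 1 - Φ2 0 - 2*K2))) t := by
    rw [hEfun]
    exact (((((hSD0.add hSD1).const_mul (2*Real.pi)).add
        (hr00sq.const_mul (Real.pi * Real.cos θc))).const_mul γex).const_add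
          (Real.pi * γgrs)).add ((hSD2.const_mul (2*Real.pi)).const_mul γgb)
  have hDeq : deriv E t = -4 * Real.pi * (γex * (K0 + K1) + γgb * K2) := by
    rw [hEd.deriv, hΦ11, hΦ20, hΦ00]
    linear_combination (2*Real.pi) * hJ
  -- nonnegativity of the dissipation integrals
  have hK0n : 0 ≤ K0 := by
    rw [hK0def]
    apply intervalIntegral.integral_nonneg (by norm_num)
    intro u hu
    have := (hr_pos 0 u hu t htIco).le
    positivity
  have hK1n : 0 ≤ K1 := by
    rw [hK1def]
    apply intervalIntegral.integral_nonneg (by norm_num)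
    intro u hu
    have := (hr_pos 1 u hu t htIco).le
    positivity
  have hK2n : 0 ≤ K2 := by
    rw [hK2def]
    apply intervalIntegral.integral_nonneg (by norm_num)
    intro u hu
    have := (hr_pos 2 u hu t htIco).le
    positivity
  refine ⟨hDeq, ?_⟩
  rw [hDeq]
  have hX : 0 ≤ γex * (K0 + K1) + γgb * K2 :=
    add_nonneg (mul_nonneg hγex.le (add_nonneg hK0n hK1n)) (mul_nonneg hγgb hK2n)
  nlinarith [Real.pi_pos]
end

section
/- Let λ < 0, c > 0 and a > 0, and let r, θ : [0,1] → ℝ be continuously differentiable functions with r(α) > 0, r'(α) = √c · cos θ(α), and sin θ(α) = λ (r(α) − a²/r(α)) for all α ∈ [0,1]. Assume that the set {α ∈ [0,1] : cos θ(α) = 0} has empty interior. Then θ'(α) = λ √c (1 + a²/r(α)²) < λ√c < 0 for every α ∈ [0,1]; in particular θ is strictly decreasing on [0,1]. -/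
/-!
Differentiating the first integral `sin θ = λ (r - a² / r)` and using `r' = √c cos θ` gives
`cos θ · θ' = λ √c cos θ (1 + a² / r²)`. Cancelling `cos θ` yields the formula for `θ'` wherever
`cos θ ≠ 0`; this set is dense in `[0, 1]`, so the formula extends to all of `[0, 1]` by continuity
of both sides. Since `λ √c < 0`, the derivative is negative and `θ` is strictly decreasing.
-/

open Set Filter Topology Real

lemma HasDerivAt.sub_sq_div {r : ℝ → ℝ} {r' x : ℝ} (a : ℝ) (hr : HasDerivAt r r' x)
    (hx : r x ≠ 0) :
    HasDerivAt (fun y => r y - a ^ 2 / r y) (r' * (1 + a ^ 2 / r x ^ 2)) x := by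
  refine (hr.sub ((hasDerivAt_const x (a ^ 2)).div hr hx)).congr_deriv ?_
  field_simp
  ring

lemma deriv_eq_of_sin_eq_sub_sq_div {lam k a α : ℝ} {r θ : ℝ → ℝ} {s : Set ℝ} (hs : s ∈ 𝓝 α)
    (hr : DifferentiableAt ℝ r α) (hθ : DifferentiableAt ℝ θ α) (hrα : r α ≠ 0)
    (hr' : deriv r α = k * cos (θ α))
    (hsin : ∀ β ∈ s, sin (θ β) = lam * (r β - a ^ 2 / r β)) (hcos : cos (θ α) ≠ 0) :
    deriv θ α = lam * k * (1 + a ^ 2 / r α ^ 2) := by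
  have hrhs := (hr.hasDerivAt.sub_sq_div a hrα).const_mul lam
  have hderiv_eq := hθ.hasDerivAt.sin.unique
    (hrhs.congr_of_eventuallyEq (eventually_of_mem hs hsin))
  refine mul_left_cancel₀ hcos ?_
  rw [hderiv_eq, hr']
  ring

lemma Icc_subset_closure_Ioo_diff {a b : ℝ} (hab : a ≠ b) {S : Set ℝ} (hS : interior S = ∅) :
    Icc a b ⊆ closure (Ioo a b \ S) := by
  rw [← closure_Ioo hab]
  exact closure_minimal
    ((interior_eq_empty_iff_dense_compl.mp hS).open_subset_closure_inter isOpen_Ioo)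
    isClosed_closure

/-- Monotonicity of the tangent angle along a steady-state exterior curve with
constant negative mean curvature `lam`. -/
theorem theta_strict_anti (lam c a : ℝ) (hlam : lam < 0) (hc : 0 < c) (ha : 0 < a)
    (r θ : ℝ → ℝ) (hrC1 : ContDiff ℝ 1 r) (hθC1 : ContDiff ℝ 1 θ)
    (hrpos : ∀ α ∈ Set.Icc (0:ℝ) 1, 0 < r α)
    (hr' : ∀ α ∈ Set.Icc (0:ℝ) 1, deriv r α = Real.sqrt c * Real.cos (θ α))
    (hsin : ∀ α ∈ Set.Icc (0:ℝ) 1, Real.sin (θ α) = lam * (r α - a ^ 2 / r α))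
    (hcos : interior {α : ℝ | α ∈ Set.Icc (0:ℝ) 1 ∧ Real.cos (θ α) = 0} = ∅) :
    (∀ α ∈ Set.Icc (0:ℝ) 1,
      deriv θ α = lam * Real.sqrt c * (1 + a ^ 2 / (r α) ^ 2) ∧
      deriv θ α < lam * Real.sqrt c ∧ lam * Real.sqrt c < 0) ∧
    StrictAntiOn θ (Set.Icc 0 1) := by
  have hk : lam * √c < 0 := mul_neg_of_neg_of_pos hlam (sqrt_pos.mpr hc)
  have hderiv_cos_ne_zero : EqOn (deriv θ) (fun α => lam * √c * (1 + a ^ 2 / r α ^ 2))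
      (Ioo 0 1 \ {α | α ∈ Icc (0:ℝ) 1 ∧ cos (θ α) = 0}) := by
    rintro α ⟨hα, hαS⟩
    have hαIcc := Ioo_subset_Icc_self hα
    exact deriv_eq_of_sin_eq_sub_sq_div (Icc_mem_nhds hα.1 hα.2)
      (hrC1.differentiable one_ne_zero α) (hθC1.differentiable one_ne_zero α)
      (hrpos α hαIcc).ne' (hr' α hαIcc) hsin (fun h => hαS ⟨hαIcc, h⟩)
  have hrhs_cont : ContinuousOn (fun α => lam * √c * (1 + a ^ 2 / r α ^ 2)) (Icc 0 1) :=
    continuousOn_const.mul <| continuousOn_const.add <| continuousOn_const.div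
      (hrC1.continuous.continuousOn.pow 2) fun α hα => (pow_pos (hrpos α hα) 2).ne'
  have hderiv : EqOn (deriv θ) (fun α => lam * √c * (1 + a ^ 2 / r α ^ 2)) (Icc 0 1) :=
    hderiv_cos_ne_zero.of_subset_closure (hθC1.continuous_deriv le_rfl).continuousOn hrhs_cont
      (sdiff_subset.trans Ioo_subset_Icc_self) (Icc_subset_closure_Ioo_diff zero_ne_one hcos)
  have hlt : ∀ α ∈ Icc (0:ℝ) 1, deriv θ α < lam * √c := fun α hα => by
    have hq : 0 < a ^ 2 / r α ^ 2 := div_pos (pow_pos ha 2) (pow_pos (hrpos α hα) 2)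
    rw [hderiv hα]
    nlinarith
  refine ⟨fun α hα => ⟨hderiv hα, hlt α hα, hk⟩,
    strictAntiOn_of_deriv_neg (convex_Icc 0 1) hθC1.continuous.continuousOn fun α hα => ?_⟩
  rw [interior_Icc] at hα
  exact (hlt α (Ioo_subset_Icc_self hα)).trans hk
end

section
/- Let β ∈ (π/2, π), and let A > 0, σ > 0 satisfy A² + σ² < 1 and A·cos β + σ·sin β < 0. Set r̄ = √(A² + σ²), θ̄₂ = arcsin(A/r̄) + β − π, and λ = (A cos β + σ sin β)/(1 − A² − σ²). Then λ < 0, sin θ̄₂ = (−A cos β − σ sin β)/r̄ ∈ (0, 1), the identity r̄ = (sin θ̄₂ − √(sin² θ̄₂ + 4λ²))/(2λ) holds, and λ is the unique negative real number satisfying this identity. -/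
/-!
Squaring away the root, the nodoid boundary condition `r = (s - √(s² + 4λ²)) / (2λ)` with
`λ < 0` becomes the relation `λ (1 - r²) = -s r`, which is linear in `λ`; since `r̄ < 1` it has the
unique solution `λ = -s r̄ / (1 - r̄²)`. Angle addition gives `s = sin θ̄₂ = -(A cos β + σ sin β) / r̄`,
so this solution is the stated `λ`, and `s < 1` is the strict Cauchy–Schwarz inequality for
`(A, σ)` and `(cos β, sin β)`, strict because these vectors are not parallel.
-/

open Real

theorem eq_sub_sqrt_div_iff {s r l : ℝ} (hs : 0 ≤ s) (hr : 0 ≤ r) (hl : l < 0) :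
    r = (s - √(s ^ 2 + 4 * l ^ 2)) / (2 * l) ↔ l * (1 - r ^ 2) = -(s * r) := by
  rw [eq_div_iff (by linarith)]
  constructor
  · intro h
    have hsqrt : √(s ^ 2 + 4 * l ^ 2) = s - 2 * l * r := by linarith
    have hsq := Real.sq_sqrt (by positivity : 0 ≤ s ^ 2 + 4 * l ^ 2)
    rw [hsqrt] at hsq
    exact mul_left_cancel₀ hl.ne (by linear_combination (-1 / 4 : ℝ) * hsq)
  · intro h
    have hsqrt : √(s ^ 2 + 4 * l ^ 2) = s - 2 * l * r := by
      rw [show s ^ 2 + 4 * l ^ 2 = (s - 2 * l * r) ^ 2 by linear_combination 4 * l * h]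
      exact Real.sqrt_sq (by nlinarith)
    rw [hsqrt]
    ring

theorem sin_arcsin_div_sqrt_add {A σ : ℝ} (hσ : 0 ≤ σ) (hpos : 0 < A ^ 2 + σ ^ 2) (β : ℝ) :
    sin (arcsin (A / √(A ^ 2 + σ ^ 2)) + β) =
      (A * cos β + σ * sin β) / √(A ^ 2 + σ ^ 2) := by
  set r := √(A ^ 2 + σ ^ 2) with hr_def
  have hr : 0 < r := Real.sqrt_pos.mpr hpos
  have hr2 : r ^ 2 = A ^ 2 + σ ^ 2 := Real.sq_sqrt hpos.le
  have hAr : |A / r| ≤ 1 := by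
    rw [abs_div, abs_of_pos hr, div_le_one hr]
    exact Real.abs_le_sqrt (by nlinarith)
  have hcos : cos (arcsin (A / r)) = σ / r := by
    rw [Real.cos_arcsin, show 1 - (A / r) ^ 2 = (σ / r) ^ 2 by field_simp; linarith,
      Real.sqrt_sq (by positivity)]
  rw [sin_add, Real.sin_arcsin (abs_le.mp hAr).1 (abs_le.mp hAr).2, hcos]
  field_simp

theorem sq_mul_cos_add_mul_sin_lt {A σ β : ℝ} (h : A * sin β ≠ σ * cos β) :
    (A * cos β + σ * sin β) ^ 2 < A ^ 2 + σ ^ 2 := by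
  have hne : 0 < (A * sin β - σ * cos β) ^ 2 := sq_pos_of_ne_zero (sub_ne_zero.mpr h)
  nlinarith [sin_sq_add_cos_sq β]

/-- The boundary condition `r₂(θ̄₂) = r̄` for the outer exterior nodoid: it holds for
`λ = (A cos β + σ sin β)/(1 − A² − σ²)`, and `λ` is the unique negative number for
which it holds. -/
theorem outer_nodoid_matching (β A σ : ℝ)
    (hβ : β ∈ Set.Ioo (Real.pi / 2) Real.pi) (hA : 0 < A) (hσ : 0 < σ)
    (h1 : A ^ 2 + σ ^ 2 < 1) (h2 : A * Real.cos β + σ * Real.sin β < 0)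
    (rbar θ2 lam : ℝ)
    (hrbar : rbar = Real.sqrt (A ^ 2 + σ ^ 2))
    (hθ2 : θ2 = Real.arcsin (A / rbar) + β - Real.pi)
    (hlam : lam = (A * Real.cos β + σ * Real.sin β) / (1 - A ^ 2 - σ ^ 2)) :
    lam < 0 ∧
    Real.sin θ2 = (-(A * Real.cos β) - σ * Real.sin β) / rbar ∧
    Real.sin θ2 ∈ Set.Ioo (0:ℝ) 1 ∧
    rbar = (Real.sin θ2 - Real.sqrt ((Real.sin θ2) ^ 2 + 4 * lam ^ 2)) / (2 * lam) ∧
    (∀ l : ℝ, l < 0 →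
      rbar = (Real.sin θ2 - Real.sqrt ((Real.sin θ2) ^ 2 + 4 * l ^ 2)) / (2 * l) →
      l = lam) := by
  have hpos : 0 < A ^ 2 + σ ^ 2 := by positivity
  have hr : 0 < rbar := hrbar ▸ Real.sqrt_pos.mpr hpos
  have hr2 : rbar ^ 2 = A ^ 2 + σ ^ 2 := hrbar ▸ Real.sq_sqrt hpos.le
  have hlam_neg : lam < 0 := hlam ▸ div_neg_of_neg_of_pos h2 (by linarith)
  have hsin : sin θ2 = (-(A * cos β) - σ * sin β) / rbar := by
    rw [hθ2, sin_sub_pi, hrbar, sin_arcsin_div_sqrt_add hσ.le hpos]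
    ring
  have hsinβ : 0 < sin β := sin_pos_of_pos_of_lt_pi (by linarith [pi_pos, hβ.1]) hβ.2
  have hcosβ : cos β < 0 := cos_neg_of_pi_div_two_lt_of_lt hβ.1 (by linarith [pi_pos, hβ.2])
  have hnot_parallel : A * sin β ≠ σ * cos β :=
    ((mul_neg_of_pos_of_neg hσ hcosβ).trans (mul_pos hA hsinβ)).ne'
  have hsin_lt : -(A * cos β) - σ * sin β < rbar :=
    hrbar ▸ Real.lt_sqrt_of_sq_lt (by nlinarith [sq_mul_cos_add_mul_sin_lt hnot_parallel])
  have hs : 0 < sin θ2 := hsin ▸ div_pos (by linarith) hr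
  have hlinear : lam * (1 - rbar ^ 2) = -(sin θ2 * rbar) := by
    have : 1 - A ^ 2 - σ ^ 2 ≠ 0 := by linarith
    rw [hlam, hsin, hr2]
    field_simp
    ring
  refine ⟨hlam_neg, hsin, ⟨hs, hsin ▸ (div_lt_one hr).mpr hsin_lt⟩,
    (eq_sub_sqrt_div_iff hs.le hr.le hlam_neg).mpr hlinear, fun l hl h => ?_⟩
  have hl_linear := (eq_sub_sqrt_div_iff hs.le hr.le hl).mp h
  exact mul_right_cancel₀ (by nlinarith : (1 : ℝ) - rbar ^ 2 ≠ 0) (hl_linear.trans hlinear.symm)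
end

section
/- Let β ∈ (π/2, π), and let A > 0, σ > 0 satisfy A² + σ² < 1, A·cos β + σ·sin β < 0, and (2A² + 2σ² − 1)·A·cos β + σ·sin β < 0. Set r̄ = √(A² + σ²), θ̄₁ = arcsin(A/r̄) − β, λ = (A cos β + σ sin β)/(1 − A² − σ²), and a_ℓ = √( ((2A² + 2σ² − 1) A cos β + σ sin β) / (A cos β + σ sin β) ). Then sin θ̄₁ = (A cos β − σ sin β)/r̄ < 0, and the identity r̄ = (sin θ̄₁ − √(sin² θ̄₁ + 4λ² a_ℓ²))/(2λ) holds. -/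
/-! The number `r̄` is a root of the quadratic `λ r² - (sin θ̄₁) r - λ a_ℓ² = 0`, whose roots
are `(sin θ̄₁ ∓ √(sin² θ̄₁ + 4 λ² a_ℓ²)) / (2λ)`: once `r̄ sin θ̄₁ = A cos β - σ sin β`, this is
exactly what the formula for `a_ℓ` was chosen to achieve. The hypothesis on
`(2A² + 2σ² - 1) A cos β + σ sin β` makes `sin θ̄₁ - 2λ r̄` nonnegative, which singles out the
root with the minus sign. -/

open Real

theorem eq_div_sub_sqrt_of_quadratic_eq_zero {l s a r : ℝ} (hl : l ≠ 0)
    (hq : l * r ^ 2 - s * r - l * a ^ 2 = 0) (hs : 0 ≤ s - 2 * l * r) :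
    r = (s - √(s ^ 2 + 4 * l ^ 2 * a ^ 2)) / (2 * l) := by
  have hsq : s ^ 2 + 4 * l ^ 2 * a ^ 2 = (s - 2 * l * r) ^ 2 := by
    linear_combination (-4 * l) * hq
  rw [hsq, sqrt_sq hs]
  field_simp
  ring

theorem sin_arcsin_div_sqrt_sub {A σ : ℝ} (hσ : 0 ≤ σ) (hR : 0 < A ^ 2 + σ ^ 2) (β : ℝ) :
    sin (arcsin (A / √(A ^ 2 + σ ^ 2)) - β) = (A * cos β - σ * sin β) / √(A ^ 2 + σ ^ 2) := by
  set r := √(A ^ 2 + σ ^ 2)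
  have hr : 0 < r := sqrt_pos.2 hR
  have hr2 : r ^ 2 = A ^ 2 + σ ^ 2 := sq_sqrt hR.le
  have hAr : |A / r| ≤ 1 := by
    rw [abs_div, abs_of_pos hr, div_le_one hr]
    exact abs_le_sqrt (by nlinarith)
  have hcos : cos (arcsin (A / r)) = σ / r := by
    have h : 1 - (A / r) ^ 2 = (σ / r) ^ 2 := by
      field_simp
      linarith
    rw [cos_arcsin, h, sqrt_sq (div_nonneg hσ hr.le)]
  rw [sin_sub, sin_arcsin (abs_le.1 hAr).1 (abs_le.1 hAr).2, hcos]
  field_simp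

section SteadyState

variable {u v R r s l a : ℝ}

theorem nodoid_quadratic_of_steady_state (hr : r ^ 2 = R) (hs : r * s = u - v)
    (hl : l * (1 - R) = u + v) (ha : a ^ 2 * (u + v) = (2 * R - 1) * u + v) (huv : u + v ≠ 0) :
    l * r ^ 2 - s * r - l * a ^ 2 = 0 := by
  refine mul_left_cancel₀ huv ?_
  rw [hr, mul_comm s r, hs]
  linear_combination (u - v) * hl - l * ha

theorem sub_two_mul_nonneg_of_steady_state (hr : r ^ 2 = R) (hs : r * s = u - v)
    (hl : l * (1 - R) = u + v) (hr0 : 0 < r) (hR : R < 1) (hu : u < 0)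
    (hwaist : (2 * R - 1) * u + v < 0) :
    0 ≤ s - 2 * l * r := by
  have hR0 : 0 < R := hr ▸ pow_pos hr0 2
  have h1R : 0 < 1 - R := by linarith
  have hscaled : r * (1 - R) * (s - 2 * l * r)
      = -(1 + R) * ((2 * R - 1) * u + v) + 2 * R * (1 - R) * -u := by
    linear_combination (1 - R) * hs - 2 * r ^ 2 * hl - 2 * (u + v) * hr
  have hwaist' : 0 < -(1 + R) * ((2 * R - 1) * u + v) :=
    mul_pos_of_neg_of_neg (by linarith) hwaist
  have hu' : 0 < 2 * R * (1 - R) * -u := by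
    have : 0 < -u := by linarith
    positivity
  have key : 0 < r * (1 - R) * (s - 2 * l * r) := by
    rw [hscaled]
    linarith
  exact (pos_of_mul_pos_right key (by positivity)).le

end SteadyState

theorem inner_nodoid_matching_general (β A σ : ℝ)
    (hβ : β ∈ Set.Ioo (Real.pi / 2) Real.pi) (hσ : 0 < σ)
    (h1 : A ^ 2 + σ ^ 2 < 1) (h2 : A * Real.cos β + σ * Real.sin β < 0)
    (h3 : (2 * A ^ 2 + 2 * σ ^ 2 - 1) * A * Real.cos β + σ * Real.sin β < 0)
    (rbar θ1 lam aℓ : ℝ)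
    (hrbar : rbar = Real.sqrt (A ^ 2 + σ ^ 2))
    (hθ1 : θ1 = Real.arcsin (A / rbar) - β)
    (hlam : lam = (A * Real.cos β + σ * Real.sin β) / (1 - A ^ 2 - σ ^ 2))
    (haℓ : aℓ = Real.sqrt (((2 * A ^ 2 + 2 * σ ^ 2 - 1) * A * Real.cos β + σ * Real.sin β)
        / (A * Real.cos β + σ * Real.sin β))) :
    Real.sin θ1 = (A * Real.cos β - σ * Real.sin β) / rbar ∧
    Real.sin θ1 < 0 ∧
    rbar = (Real.sin θ1 - Real.sqrt ((Real.sin θ1) ^ 2 + 4 * lam ^ 2 * aℓ ^ 2))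
      / (2 * lam) := by
  have hσs : 0 < σ * sin β :=
    mul_pos hσ (sin_pos_of_pos_of_lt_pi (by linarith [hβ.1, pi_pos]) hβ.2)
  have hR : 0 < A ^ 2 + σ ^ 2 := by positivity
  have hr : 0 < rbar := hrbar ▸ sqrt_pos.2 hR
  have hr2 : rbar ^ 2 = A ^ 2 + σ ^ 2 := hrbar ▸ sq_sqrt hR.le
  have hsin : sin θ1 = (A * cos β - σ * sin β) / rbar := by
    rw [hθ1, hrbar]
    exact sin_arcsin_div_sqrt_sub hσ.le hR β
  have hrsin : rbar * sin θ1 = A * cos β - σ * sin β := by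
    rw [hsin]
    field_simp
  have hlam' : lam * (1 - (A ^ 2 + σ ^ 2)) = A * cos β + σ * sin β := by
    rw [hlam, sub_sub]
    exact div_mul_cancel₀ _ (by linarith)
  have haℓ' : aℓ ^ 2 * (A * cos β + σ * sin β)
      = (2 * (A ^ 2 + σ ^ 2) - 1) * (A * cos β) + σ * sin β := by
    rw [haℓ, sq_sqrt (div_nonneg_of_nonpos h3.le h2.le), div_mul_cancel₀ _ h2.ne]
    ring
  have hsin_neg : sin θ1 < 0 := by
    rw [hsin]
    exact div_neg_of_neg_of_pos (by linarith) hr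
  have hlam_ne : lam ≠ 0 := by
    rw [hlam]
    exact div_ne_zero h2.ne (by linarith)
  refine ⟨hsin, hsin_neg, eq_div_sub_sqrt_of_quadratic_eq_zero hlam_ne
    (nodoid_quadratic_of_steady_state hr2 hrsin hlam' haℓ' h2.ne)
    (sub_two_mul_nonneg_of_steady_state hr2 hrsin hlam' hr h1 (by linarith) (by linarith))⟩

/-- The boundary condition `r₁(θ̄₁) = r̄` for the inner exterior nodoid with waist
parameter `a_ℓ`. -/
theorem inner_nodoid_matching (β A σ : ℝ)
    (hβ : β ∈ Set.Ioo (Real.pi / 2) Real.pi) (hA : 0 < A) (hσ : 0 < σ)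
    (h1 : A ^ 2 + σ ^ 2 < 1) (h2 : A * Real.cos β + σ * Real.sin β < 0)
    (h3 : (2 * A ^ 2 + 2 * σ ^ 2 - 1) * A * Real.cos β + σ * Real.sin β < 0)
    (rbar θ1 lam aℓ : ℝ)
    (hrbar : rbar = Real.sqrt (A ^ 2 + σ ^ 2))
    (hθ1 : θ1 = Real.arcsin (A / rbar) - β)
    (hlam : lam = (A * Real.cos β + σ * Real.sin β) / (1 - A ^ 2 - σ ^ 2))
    (haℓ : aℓ = Real.sqrt (((2 * A ^ 2 + 2 * σ ^ 2 - 1) * A * Real.cos β + σ * Real.sin β)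
        / (A * Real.cos β + σ * Real.sin β))) :
    Real.sin θ1 = (A * Real.cos β - σ * Real.sin β) / rbar ∧
    Real.sin θ1 < 0 ∧
    rbar = (Real.sin θ1 - Real.sqrt ((Real.sin θ1) ^ 2 + 4 * lam ^ 2 * aℓ ^ 2))
      / (2 * lam) :=
  inner_nodoid_matching_general β A σ hβ hσ h1 h2 h3 rbar θ1 lam aℓ hrbar hθ1 hlam haℓ
end

section
/- Let β ∈ (π/2, π) and let A > 0, σ > 0 satisfy A² + σ² < 1. Then: (i) if tan β > (A/σ)(1 − 2A² − 2σ²), then A cos β + σ sin β < 0; (ii) the inequality (2A² + 2σ² − 1)·A·cos β + σ·sin β < 0 holds if and only if tan β > (A/σ)(1 − 2A² − 2σ²); (iii) if tan β > (A/σ)(1 − 2A² − 2σ²), then the quantity a_ℓ² := ((2A² + 2σ² − 1) A cos β + σ sin β)/(A cos β + σ sin β) satisfies 0 < a_ℓ² < 1. -/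
/-- Parametric reformulation of the constraints `λ < 0` and `0 < a_ℓ < 1` in the
steady-state description: (i) the `a_ℓ` constraint implies `λ < 0`; (ii) explicit
equivalence; (iii) `0 < a_ℓ² < 1`. -/
theorem constraints_reformulation (β A σ : ℝ)
    (hβ : β ∈ Set.Ioo (Real.pi / 2) Real.pi) (hA : 0 < A) (hσ : 0 < σ)
    (h1 : A ^ 2 + σ ^ 2 < 1) :
    (Real.tan β > (A / σ) * (1 - 2 * A ^ 2 - 2 * σ ^ 2) →
      A * Real.cos β + σ * Real.sin β < 0) ∧
    ((2 * A ^ 2 + 2 * σ ^ 2 - 1) * A * Real.cos β + σ * Real.sin β < 0 ↔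
      Real.tan β > (A / σ) * (1 - 2 * A ^ 2 - 2 * σ ^ 2)) ∧
    (Real.tan β > (A / σ) * (1 - 2 * A ^ 2 - 2 * σ ^ 2) →
      0 < ((2 * A ^ 2 + 2 * σ ^ 2 - 1) * A * Real.cos β + σ * Real.sin β)
          / (A * Real.cos β + σ * Real.sin β) ∧
      ((2 * A ^ 2 + 2 * σ ^ 2 - 1) * A * Real.cos β + σ * Real.sin β)
          / (A * Real.cos β + σ * Real.sin β) < 1) := by
  obtain ⟨hβ1, hβ2⟩ := hβ
  have hcos : Real.cos β < 0 :=
    Real.cos_neg_of_pi_div_two_lt_of_lt hβ1 (by linarith [Real.pi_pos])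
  have hsin : 0 < Real.sin β :=
    Real.sin_pos_of_pos_of_lt_pi (lt_trans (by positivity) hβ1) hβ2
  have htan : Real.tan β = Real.sin β / Real.cos β := Real.tan_eq_sin_div_cos β
  have key : ((A / σ) * (1 - 2 * A ^ 2 - 2 * σ ^ 2) < Real.tan β) ↔
      Real.sin β < (A / σ) * (1 - 2 * A ^ 2 - 2 * σ ^ 2) * Real.cos β := by
    rw [htan, lt_div_iff_of_neg hcos]
  have hσ' := hσ.ne'
  constructor
  · intro h
    replace h := key.mp h
    have h2 : σ * Real.sin β < A * (1 - 2 * A ^ 2 - 2 * σ ^ 2) * Real.cos β := by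
      have := (mul_lt_mul_iff_right₀ hσ).mpr h
      calc σ * Real.sin β < σ * ((A / σ) * (1 - 2 * A ^ 2 - 2 * σ ^ 2) * Real.cos β) := this
        _ = A * (1 - 2 * A ^ 2 - 2 * σ ^ 2) * Real.cos β := by field_simp; try ring
    nlinarith [mul_neg_of_pos_of_neg hA hcos, sq_nonneg A, sq_nonneg σ]
  constructor
  · rw [gt_iff_lt, key]
    constructor
    · intro h
      have h2 : σ * Real.sin β < A * (1 - 2 * A ^ 2 - 2 * σ ^ 2) * Real.cos β := by nlinarith
      have : (A / σ) * (1 - 2 * A ^ 2 - 2 * σ ^ 2) * Real.cos β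
          = (A * (1 - 2 * A ^ 2 - 2 * σ ^ 2) * Real.cos β) / σ := by field_simp; try ring
      rw [this, lt_div_iff₀ hσ]
      linarith [h2, mul_comm (Real.sin β) σ]
    · intro h
      have h2 : σ * Real.sin β < A * (1 - 2 * A ^ 2 - 2 * σ ^ 2) * Real.cos β := by
        have := (mul_lt_mul_iff_right₀ hσ).mpr h
        calc σ * Real.sin β < σ * ((A / σ) * (1 - 2 * A ^ 2 - 2 * σ ^ 2) * Real.cos β) := this
          _ = A * (1 - 2 * A ^ 2 - 2 * σ ^ 2) * Real.cos β := by field_simp; try ring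
      nlinarith
  · intro h
    replace h := key.mp h
    have h2 : σ * Real.sin β < A * (1 - 2 * A ^ 2 - 2 * σ ^ 2) * Real.cos β := by
      have := (mul_lt_mul_iff_right₀ hσ).mpr h
      calc σ * Real.sin β < σ * ((A / σ) * (1 - 2 * A ^ 2 - 2 * σ ^ 2) * Real.cos β) := this
        _ = A * (1 - 2 * A ^ 2 - 2 * σ ^ 2) * Real.cos β := by field_simp; try ring
    have hnum : (2 * A ^ 2 + 2 * σ ^ 2 - 1) * A * Real.cos β + σ * Real.sin β < 0 := by
      nlinarith
    have hden : A * Real.cos β + σ * Real.sin β < 0 := by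
      nlinarith [mul_neg_of_pos_of_neg hA hcos]
    constructor
    · exact div_pos_of_neg_of_neg hnum hden
    · rw [div_lt_one_of_neg hden]
      nlinarith [mul_neg_of_pos_of_neg hA hcos]
end

section
/- Let β ∈ (π/2, π) and let A > 0, σ > 0 satisfy A² + σ² < 1 and tan β > (A/σ)(1 − 2A² − 2σ²), so that A cos β + σ sin β < 0 and a_ℓ := √( ((2A² + 2σ² − 1) A cos β + σ sin β)/(A cos β + σ sin β) ) is a well-defined number in (0,1). Then a_ℓ < A if and only if tan β < A(1 − A² − 2σ²)/(σ(1 − A²)). -/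
/-- Parametric reformulation of the sufficient condition (C8'): `a_ℓ < A` if and only
if `tan β < A(1 − A² − 2σ²)/(σ(1 − A²))`. -/
theorem C8prime_reformulation (β A σ : ℝ)
    (hβ : β ∈ Set.Ioo (Real.pi / 2) Real.pi) (hA : 0 < A) (hσ : 0 < σ)
    (h1 : A ^ 2 + σ ^ 2 < 1)
    (h2 : Real.tan β > (A / σ) * (1 - 2 * A ^ 2 - 2 * σ ^ 2))
    (aℓ : ℝ)
    (haℓ : aℓ = Real.sqrt (((2 * A ^ 2 + 2 * σ ^ 2 - 1) * A * Real.cos β + σ * Real.sin β)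
        / (A * Real.cos β + σ * Real.sin β))) :
    aℓ < A ↔ Real.tan β < A * (1 - A ^ 2 - 2 * σ ^ 2) / (σ * (1 - A ^ 2)) := by
  obtain ⟨hβ1, hβ2⟩ := hβ
  have hc : Real.cos β < 0 := Real.cos_neg_of_pi_div_two_lt_of_lt hβ1 (by linarith [Real.pi_pos])
  have hs : 0 < Real.sin β := Real.sin_pos_of_pos_of_lt_pi (by linarith [Real.pi_pos]) hβ2
  set c := Real.cos β with hcdef
  set s := Real.sin β with hsdef
  have hc0 : c ≠ 0 := ne_of_lt hc
  have htan : Real.tan β = s / c := Real.tan_eq_sin_div_cos β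
  rw [htan] at h2
  have hsq : 0 < 1 - A ^ 2 - σ ^ 2 := by linarith
  -- multiply h2 by c < 0
  have t1 : s < A / σ * (1 - 2 * A ^ 2 - 2 * σ ^ 2) * c := by
    have := mul_lt_mul_of_neg_right h2 hc
    rwa [div_mul_cancel₀ s hc0] at this
  -- multiply by σ > 0
  have h2' : σ * s < A * (1 - 2 * A ^ 2 - 2 * σ ^ 2) * c := by
    have := mul_lt_mul_of_pos_left t1 hσ
    have heq : σ * (A / σ * (1 - 2 * A ^ 2 - 2 * σ ^ 2) * c)
        = A * (1 - 2 * A ^ 2 - 2 * σ ^ 2) * c := by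
      field_simp
    linarith [heq ▸ this]
  have hN : (2 * A ^ 2 + 2 * σ ^ 2 - 1) * A * c + σ * s < 0 := by
    have : A * (1 - 2 * A ^ 2 - 2 * σ ^ 2) * c = -((2 * A ^ 2 + 2 * σ ^ 2 - 1) * A * c) := by
      ring
    linarith
  have hACneg : A * (1 - A ^ 2 - σ ^ 2) * c < 0 :=
    mul_neg_of_pos_of_neg (mul_pos hA hsq) hc
  have hD : A * c + σ * s < 0 := by
    have : A * c + σ * s = ((2 * A ^ 2 + 2 * σ ^ 2 - 1) * A * c + σ * s)
        + 2 * (A * (1 - A ^ 2 - σ ^ 2) * c) := by ring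
    linarith
  have hK : 0 < σ * (1 - A ^ 2) := mul_pos hσ (by nlinarith [sq_nonneg σ])
  rw [haℓ, Real.sqrt_lt' hA, div_lt_iff_of_neg hD, htan, lt_div_iff₀ hK,
    div_mul_eq_mul_div, div_lt_iff_of_neg hc]
  have key : ((2 * A ^ 2 + 2 * σ ^ 2 - 1) * A * c + σ * s) - A ^ 2 * (A * c + σ * s)
      = s * (σ * (1 - A ^ 2)) - A * (1 - A ^ 2 - 2 * σ ^ 2) * c := by ring
  constructor <;> intro h <;> linarith
end

section
/- Let λ < 0 and a > 0, and define r̃ : [−π, π] → ℝ by r̃(θ) = (sin θ − √(sin² θ + 4λ²a²))/(2λ). Then r̃ is differentiable on [−π, π] with r̃'(θ) < 0 for θ ∈ (−π/2, π/2), r̃'(−π/2) = r̃'(π/2) = 0, and r̃'(θ) > 0 for θ ∈ [−π, −π/2) ∪ (π/2, π]. Consequently r̃(−π) = r̃(0) = r̃(π) = a, and 0 < r̃(π/2) ≤ r̃(θ) ≤ r̃(−π/2) for all θ ∈ [−π, π], with the minimum attained only at θ = π/2 and the maximum only at θ = −π/2. -/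
/-!
Writing `c = 4λ²a²`, the radius is `r̃ = φ ∘ sin` with `φ s = (s - √(s² + c)) / (2λ)`. Since
`|s| < √(s² + c)`, the numerator of `φ` is negative with derivative `1 - s / √(s² + c) > 0`, so for
`λ < 0` the function `φ` is positive and strictly decreasing. Hence `r̃'(θ) = φ'(sin θ) cos θ` has the
sign of `-cos θ`, `r̃` is smallest where `sin θ = 1` and largest where `sin θ = -1`, and at
`sin θ = 0` it equals `-√c / (2λ) = a`.
-/

open Real Set

section SubSqrtSqAdd

variable {c : ℝ}

theorem abs_lt_sqrt_sq_add (hc : 0 < c) (s : ℝ) : |s| < √(s ^ 2 + c) := by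
  rw [← sqrt_sq_eq_abs]
  exact sqrt_lt_sqrt (sq_nonneg s) (by linarith)

theorem lt_sqrt_sq_add (hc : 0 < c) (s : ℝ) : s < √(s ^ 2 + c) :=
  (le_abs_self s).trans_lt (abs_lt_sqrt_sq_add hc s)

theorem one_sub_div_sqrt_sq_add_pos (hc : 0 < c) (s : ℝ) : 0 < 1 - s / √(s ^ 2 + c) := by
  have hpos : 0 < √(s ^ 2 + c) := (abs_nonneg s).trans_lt (abs_lt_sqrt_sq_add hc s)
  rw [sub_pos, div_lt_one hpos]
  exact lt_sqrt_sq_add hc s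

theorem hasDerivAt_sub_sqrt_sq_add (hc : 0 < c) (s : ℝ) :
    HasDerivAt (fun s => s - √(s ^ 2 + c)) (1 - s / √(s ^ 2 + c)) s := by
  have hsq : HasDerivAt (fun s : ℝ => s ^ 2 + c) (2 * s) s := by
    simpa using (hasDerivAt_pow 2 s).add_const c
  have := (hasDerivAt_id' s).sub (hsq.sqrt (by positivity))
  rwa [mul_div_mul_left _ _ two_ne_zero] at this

end SubSqrtSqAdd

theorem eq_pi_div_two_of_sin_eq_one {θ : ℝ} (hθ : θ ∈ Icc (-π) π) (h : sin θ = 1) :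
    θ = π / 2 := by
  obtain ⟨k, rfl⟩ := sin_eq_one_iff.mp h
  have hk : k = 0 := by
    have hlt : (k : ℝ) < 1 := by nlinarith [hθ.2, pi_pos]
    have hgt : (-1 : ℝ) < k := by nlinarith [hθ.1, pi_pos]
    have : k < 1 := by exact_mod_cast hlt
    have : -1 < k := by exact_mod_cast hgt
    omega
  simp [hk]

theorem eq_neg_pi_div_two_of_sin_eq_neg_one {θ : ℝ} (hθ : θ ∈ Icc (-π) π) (h : sin θ = -1) :
    θ = -(π / 2) := by
  have := eq_pi_div_two_of_sin_eq_one (θ := -θ) ⟨by linarith [hθ.2], by linarith [hθ.1]⟩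
    (by rw [sin_neg, h, neg_neg])
  linarith

theorem cos_neg_of_mem_Ico_neg_pi {θ : ℝ} (hθ : θ ∈ Ico (-π) (-(π / 2))) : cos θ < 0 := by
  rw [← cos_neg]
  exact cos_neg_of_pi_div_two_lt_of_lt (by linarith [hθ.2]) (by linarith [hθ.1, pi_pos])

theorem cos_neg_of_mem_Ioc_pi {θ : ℝ} (hθ : θ ∈ Ioc (π / 2) π) : cos θ < 0 :=
  cos_neg_of_pi_div_two_lt_of_lt hθ.1 (by linarith [hθ.2, pi_pos])

section CompSin

variable {φ φ' : ℝ → ℝ} (hφ : ∀ s, HasDerivAt φ (φ' s) s) (hφ' : ∀ s, φ' s < 0)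
include hφ

theorem deriv_comp_sin (θ : ℝ) : deriv (φ ∘ sin) θ = φ' (sin θ) * cos θ :=
  ((hφ (sin θ)).comp θ (hasDerivAt_sin θ)).deriv

include hφ'

theorem deriv_comp_sin_neg_of_cos_pos {θ : ℝ} (hcos : 0 < cos θ) : deriv (φ ∘ sin) θ < 0 := by
  rw [deriv_comp_sin hφ]
  exact mul_neg_of_neg_of_pos (hφ' _) hcos

theorem deriv_comp_sin_pos_of_cos_neg {θ : ℝ} (hcos : cos θ < 0) : 0 < deriv (φ ∘ sin) θ := by
  rw [deriv_comp_sin hφ]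
  exact mul_pos_of_neg_of_neg (hφ' _) hcos

theorem comp_sin_mem_Icc (θ : ℝ) :
    (φ ∘ sin) θ ∈ Icc ((φ ∘ sin) (π / 2)) ((φ ∘ sin) (-(π / 2))) := by
  have hanti := strictAnti_of_hasDerivAt_neg hφ hφ'
  simp only [mem_Icc, Function.comp_apply, sin_neg, sin_pi_div_two]
  exact ⟨hanti.antitone (sin_le_one θ), hanti.antitone (neg_one_le_sin θ)⟩

theorem eq_pi_div_two_of_comp_sin_eq {θ : ℝ} (hθ : θ ∈ Icc (-π) π)
    (h : (φ ∘ sin) θ = (φ ∘ sin) (π / 2)) : θ = π / 2 :=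
  eq_pi_div_two_of_sin_eq_one hθ <| by
    rw [(strictAnti_of_hasDerivAt_neg hφ hφ').injective h, sin_pi_div_two]

theorem eq_neg_pi_div_two_of_comp_sin_eq {θ : ℝ} (hθ : θ ∈ Icc (-π) π)
    (h : (φ ∘ sin) θ = (φ ∘ sin) (-(π / 2))) : θ = -(π / 2) :=
  eq_neg_pi_div_two_of_sin_eq_neg_one hθ <| by
    rw [(strictAnti_of_hasDerivAt_neg hφ hφ').injective h, sin_neg, sin_pi_div_two]

end CompSin

/-- Monotonicity properties of the radial coordinate of the full nodary curve
`r̃(θ) = (sin θ − √(sin²θ + 4λ²a²))/(2λ)` for `λ < 0`, `a > 0`. -/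
theorem nodary_radial_monotonicity (lam a : ℝ) (hlam : lam < 0) (ha : 0 < a)
    (rt : ℝ → ℝ)
    (hrt : ∀ θ, rt θ =
      (Real.sin θ - Real.sqrt ((Real.sin θ) ^ 2 + 4 * lam ^ 2 * a ^ 2)) / (2 * lam)) :
    (∀ θ ∈ Set.Icc (-Real.pi) Real.pi, DifferentiableAt ℝ rt θ) ∧
    (∀ θ ∈ Set.Ioo (-(Real.pi / 2)) (Real.pi / 2), deriv rt θ < 0) ∧
    deriv rt (-(Real.pi / 2)) = 0 ∧ deriv rt (Real.pi / 2) = 0 ∧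
    (∀ θ ∈ Set.Ico (-Real.pi) (-(Real.pi / 2)), 0 < deriv rt θ) ∧
    (∀ θ ∈ Set.Ioc (Real.pi / 2) Real.pi, 0 < deriv rt θ) ∧
    rt (-Real.pi) = a ∧ rt 0 = a ∧ rt Real.pi = a ∧
    0 < rt (Real.pi / 2) ∧
    (∀ θ ∈ Set.Icc (-Real.pi) Real.pi, rt (Real.pi / 2) ≤ rt θ ∧ rt θ ≤ rt (-(Real.pi / 2))) ∧
    (∀ θ ∈ Set.Icc (-Real.pi) Real.pi, rt θ = rt (Real.pi / 2) → θ = Real.pi / 2) ∧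
    (∀ θ ∈ Set.Icc (-Real.pi) Real.pi, rt θ = rt (-(Real.pi / 2)) → θ = -(Real.pi / 2)) := by
  have hc : 0 < 4 * lam ^ 2 * a ^ 2 := by have := hlam.ne; positivity
  set φ := fun s => (s - √(s ^ 2 + 4 * lam ^ 2 * a ^ 2)) / (2 * lam)
  have hφ s : HasDerivAt φ _ s := (hasDerivAt_sub_sqrt_sq_add hc s).div_const (2 * lam)
  have h2lam : 2 * lam < 0 := by linarith
  have hφ' s := div_neg_of_pos_of_neg (one_sub_div_sqrt_sq_add_pos hc s) h2lam
  obtain rfl : rt = φ ∘ sin := funext hrt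
  have hzero {θ : ℝ} (h : sin θ = 0) : (φ ∘ sin) θ = a := by
    have : √(0 ^ 2 + 4 * lam ^ 2 * a ^ 2) = -(2 * lam) * a := by
      rw [show (0 : ℝ) ^ 2 + 4 * lam ^ 2 * a ^ 2 = (-(2 * lam) * a) ^ 2 by ring]
      exact sqrt_sq (by nlinarith)
    simp only [φ, Function.comp_apply, h, this]
    field_simp [hlam.ne]
    ring
  refine ⟨fun θ _ => ((hφ _).comp θ (hasDerivAt_sin θ)).differentiableAt,
    fun θ hθ => deriv_comp_sin_neg_of_cos_pos hφ hφ' (cos_pos_of_mem_Ioo hθ),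
    by simp [deriv_comp_sin hφ], by simp [deriv_comp_sin hφ],
    fun θ hθ => deriv_comp_sin_pos_of_cos_neg hφ hφ' (cos_neg_of_mem_Ico_neg_pi hθ),
    fun θ hθ => deriv_comp_sin_pos_of_cos_neg hφ hφ' (cos_neg_of_mem_Ioc_pi hθ),
    hzero (by simp), hzero sin_zero, hzero sin_pi, ?_,
    fun θ _ => comp_sin_mem_Icc hφ hφ' θ,
    fun θ hθ h => eq_pi_div_two_of_comp_sin_eq hφ hφ' hθ h,
    fun θ hθ h => eq_neg_pi_div_two_of_comp_sin_eq hφ hφ' hθ h⟩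
  exact div_pos_of_neg_of_neg (sub_neg.mpr (lt_sqrt_sq_add hc _)) h2lam
end

section
/- Let λ < 0, a > 0, θ̄₁ ∈ (−π, 0) and z̄ > 0, and define z₁ : [θ̄₁, π] → ℝ by z₁(θ) = z̄ − (1/(2λ)) ∫_{θ̄₁}^{θ} [ sin²x / √(sin²x + 4λ²a²) − sin x ] dx. Then: (a) there exists θ_c ∈ (0, π] with z₁(θ_c) = 0 if and only if z₁(π) ≤ 0; (b) if such θ_c exists, it is unique; and (c) this θ_c equals π if and only if z₁(π) = 0. -/
open Real MeasureTheory intervalIntegral Set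

/-- Necessary and sufficient criterion for the existence of a contact angle
`θ_c ∈ (0, π]` with `z₁(θ_c) = 0`, its uniqueness, and the characterization of
`θ_c = π`. -/
theorem contact_angle_criterion (lam a θ1 zbar : ℝ) (hlam : lam < 0) (ha : 0 < a)
    (hθ1 : θ1 ∈ Set.Ioo (-Real.pi) (0:ℝ)) (hzbar : 0 < zbar)
    (z1 : ℝ → ℝ)
    (hz1 : ∀ θ, z1 θ = zbar - (1 / (2 * lam)) *
      ∫ x in θ1..θ,
        ((Real.sin x) ^ 2 / Real.sqrt ((Real.sin x) ^ 2 + 4 * lam ^ 2 * a ^ 2)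
          - Real.sin x)) :
    ((∃ θc ∈ Set.Ioc (0:ℝ) Real.pi, z1 θc = 0) ↔ z1 Real.pi ≤ 0) ∧
    (∀ θc ∈ Set.Ioc (0:ℝ) Real.pi, ∀ θc' ∈ Set.Ioc (0:ℝ) Real.pi,
      z1 θc = 0 → z1 θc' = 0 → θc = θc') ∧
    (∀ θc ∈ Set.Ioc (0:ℝ) Real.pi, z1 θc = 0 → (θc = Real.pi ↔ z1 Real.pi = 0)) := by
  obtain ⟨hθ1l, hθ1r⟩ := hθ1
  have hlam' : lam ≠ 0 := ne_of_lt hlam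
  set c : ℝ := 4 * lam ^ 2 * a ^ 2 with hcdef
  have hcpos : 0 < c := by positivity
  set g : ℝ → ℝ := fun x => Real.sin x ^ 2 / Real.sqrt (Real.sin x ^ 2 + c) - Real.sin x
    with hgdef
  have hsq : ∀ x : ℝ, 0 < Real.sqrt (Real.sin x ^ 2 + c) := fun x =>
    Real.sqrt_pos.2 (by positivity)
  have hgcont : Continuous g := by
    apply Continuous.sub
    · exact Continuous.div (by continuity) (by continuity) (fun x => (hsq x).ne')
    · exact Real.continuous_sin
  have hint : ∀ s t : ℝ, IntervalIntegrable g volume s t := fun s t =>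
    hgcont.intervalIntegrable s t
  set k : ℝ := -(1 / (2 * lam)) with hkdef
  have hk : 0 < k := by
    have h1 : 1 / (2 * lam) < 0 := div_neg_of_pos_of_neg one_pos (by linarith)
    simp only [hkdef]; linarith
  have hz1' : ∀ θ, z1 θ = zbar + k * ∫ x in θ1..θ, g x := by
    intro θ; rw [hz1 θ]; simp only [hgdef, hkdef]; ring
  -- strict decrease on [0, π]
  have hgneg : ∀ x ∈ Set.Ioo (0:ℝ) Real.pi, 0 < -g x := by
    intro x ⟨hx0, hxπ⟩
    have hsin : 0 < Real.sin x := Real.sin_pos_of_pos_of_lt_pi hx0 hxπ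
    have hlt : Real.sin x < Real.sqrt (Real.sin x ^ 2 + c) :=
      (Real.lt_sqrt hsin.le).2 (by linarith)
    have : Real.sin x ^ 2 / Real.sqrt (Real.sin x ^ 2 + c) < Real.sin x := by
      rw [div_lt_iff₀ (hsq x)]; nlinarith
    simp only [hgdef]; linarith
  have hstrict : ∀ s t : ℝ, 0 ≤ s → s < t → t ≤ Real.pi → z1 t < z1 s := by
    intro s t hs hst htp
    have hpos : 0 < ∫ x in s..t, -g x := by
      apply intervalIntegral.intervalIntegral_pos_of_pos_on
        ((hgcont.neg).intervalIntegrable s t)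
      · intro x hx
        exact hgneg x ⟨lt_of_le_of_lt hs hx.1, lt_of_lt_of_le hx.2 htp⟩
      · exact hst
    have hIneg : ∫ x in s..t, g x < 0 := by
      rw [intervalIntegral.integral_neg] at hpos; linarith
    have hsub : (∫ x in θ1..t, g x) - ∫ x in θ1..s, g x = ∫ x in s..t, g x :=
      intervalIntegral.integral_interval_sub_left (hint θ1 t) (hint θ1 s)
    rw [hz1' t, hz1' s]
    nlinarith [mul_pos hk (neg_pos.2 hIneg)]
  -- z1 0 > 0
  have hI0 : 0 ≤ ∫ x in θ1..0, g x := by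
    apply intervalIntegral.integral_nonneg hθ1r.le
    intro x hx
    have hsin : Real.sin x ≤ 0 :=
      Real.sin_nonpos_of_nonpos_of_neg_pi_le hx.2 (by linarith [hx.1])
    have h1 : 0 ≤ Real.sin x ^ 2 / Real.sqrt (Real.sin x ^ 2 + c) := by positivity
    simp only [hgdef]; linarith
  have hz10 : 0 < z1 0 := by
    rw [hz1' 0]; nlinarith [mul_nonneg hk.le hI0]
  -- continuity of z1
  have hz1cont : Continuous z1 := by
    have : z1 = fun θ => zbar + k * ∫ x in θ1..θ, g x := funext hz1'
    rw [this]
    exact continuous_const.add (continuous_const.mul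
      (intervalIntegral.continuous_primitive hint θ1))
  have hπpos : (0:ℝ) < Real.pi := Real.pi_pos
  constructor
  · constructor
    · rintro ⟨θc, ⟨hθc0, hθcπ⟩, hθc⟩
      rcases eq_or_lt_of_le hθcπ with h | h
      · rw [← h]; exact hθc.le
      · linarith [hstrict θc Real.pi hθc0.le h le_rfl]
    · intro hπle
      have h0 : (0:ℝ) ∈ Set.Icc (z1 Real.pi) (z1 0) := ⟨hπle, hz10.le⟩
      obtain ⟨θc, hmem, heq⟩ :=
        intermediate_value_Icc' hπpos.le hz1cont.continuousOn h0
      have hθc0 : 0 < θc := by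
        rcases eq_or_lt_of_le hmem.1 with h | h
        · exfalso; rw [← h] at heq; linarith
        · exact h
      exact ⟨θc, ⟨hθc0, hmem.2⟩, heq⟩
  constructor
  · rintro θc ⟨hθc0, hθcπ⟩ θc' ⟨hθc'0, hθc'π⟩ h h'
    by_contra hne
    rcases lt_or_gt_of_ne hne with hlt | hlt
    · linarith [hstrict θc θc' hθc0.le hlt hθc'π]
    · linarith [hstrict θc' θc hθc'0.le hlt hθcπ]
  · rintro θc ⟨hθc0, hθcπ⟩ h
    constructor
    · rintro rfl; exact h
    · intro hπ0
      rcases eq_or_lt_of_le hθcπ with heq | hlt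
      · exact heq
      · exfalso; linarith [hstrict θc Real.pi hθc0.le hlt le_rfl]
end

section
/- For every β ∈ (π/2, π) there exists ε̃ ∈ (0, 1) such that for all (A, σ) with 1 − ε̃ < A < 1 and 0 < σ < √(1 − A²), the following two conditions hold: (I) tan β > (A/σ)(1 − 2A² − 2σ²); and (II) if cos β < −A/√(σ² + A²), then cos β < −1/(2A). -/
set_option maxHeartbeats 1000000


/-- For `ε̃` sufficiently small, the constraints (I) and (II) hold throughout the
corner neighborhood `Ω_ε̃ = {(A, σ) : 1 − ε̃ < A < 1, 0 < σ < √(1 − A²)}`. -/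
theorem constraints_near_corner :
    ∀ β ∈ Set.Ioo (Real.pi / 2) Real.pi,
      ∃ ε ∈ Set.Ioo (0:ℝ) 1, ∀ A σ : ℝ,
        1 - ε < A → A < 1 → 0 < σ → σ < Real.sqrt (1 - A ^ 2) →
        Real.tan β > (A / σ) * (1 - 2 * A ^ 2 - 2 * σ ^ 2) ∧
        (Real.cos β < -A / Real.sqrt (σ ^ 2 + A ^ 2) →
          Real.cos β < -1 / (2 * A)) := by
  intro β hβ
  have hs : 0 < Real.sin β :=
    Real.sin_pos_of_pos_of_lt_pi (by linarith [Real.pi_pos, hβ.1]) hβ.2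
  have hc : Real.cos β < 0 := by
    have h2 := hβ.2
    exact Real.cos_neg_of_pi_div_two_lt_of_lt hβ.1 (by linarith [Real.pi_pos])
  have ht : Real.tan β < 0 := by
    rw [Real.tan_eq_sin_div_cos]
    exact div_neg_of_pos_of_neg hs hc
  set t := Real.tan β with htdef
  have htne : t ≠ 0 := ne_of_lt ht
  have ht2 : 0 < t ^ 2 := by positivity
  refine ⟨min (1/8) (49/(512 * t^2)),
    ⟨lt_min (by norm_num) (by positivity),
      lt_of_le_of_lt (min_le_left _ _) (by norm_num)⟩, ?_⟩
  intro A σ hA1 hA2 hσ1 hσ2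
  have hε1 : min (1/8) (49/(512*t^2)) ≤ (1/8 : ℝ) := min_le_left _ _
  have hε2 : min (1/8) (49/(512*t^2)) ≤ 49/(512*t^2) := min_le_right _ _
  have hA78 : (7:ℝ)/8 < A := by linarith
  have hApos : (0:ℝ) < A := by linarith
  have hσsq : σ ^ 2 < 1 - A ^ 2 := (Real.lt_sqrt hσ1.le).mp hσ2
  have hAε : 1 - A < 49/(512*t^2) := by linarith
  have hAt : (1 - A) * t ^ 2 < 49/512 := by
    rw [show (49:ℝ)/(512*t^2) = 49/512/t^2 by ring] at hAε
    exact (lt_div_iff₀ ht2).mp hAε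
  have hkey : σ ^ 2 * t ^ 2 < 49/256 := by
    nlinarith [mul_lt_mul_of_pos_right hσsq ht2, ht2.le, mul_lt_mul_of_pos_right hAt (by linarith : (0:ℝ) < 1 + A)]
  have hnt : 0 < -t := neg_pos.mpr ht
  have hst : σ * (-t) < 7/16 := by nlinarith [mul_pos hσ1 hnt]
  constructor
  · rw [gt_iff_lt, div_mul_eq_mul_div, div_lt_iff₀ hσ1]
    have hX : 1 - 2*A^2 - 2*σ^2 < -(1/2) := by nlinarith
    have := mul_lt_mul_of_pos_left hX hApos
    nlinarith
  · intro h
    have hsum : σ ^ 2 + A ^ 2 ≤ 1 := by nlinarith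
    have hspos : 0 < Real.sqrt (σ ^ 2 + A ^ 2) := Real.sqrt_pos.mpr (by positivity)
    have hsle : Real.sqrt (σ ^ 2 + A ^ 2) ≤ 1 := Real.sqrt_le_one.mpr hsum
    have hAle : A ≤ A / Real.sqrt (σ ^ 2 + A ^ 2) := by
      rw [le_div_iff₀ hspos]; nlinarith
    have h1 : Real.cos β < -A := by
      have : -A / Real.sqrt (σ ^ 2 + A ^ 2) ≤ -A := by
        rw [neg_div]; linarith
      linarith
    have h2 : -A < -1 / (2 * A) := by
      rw [neg_div, neg_lt_neg_iff, div_lt_iff₀ (by linarith : (0:ℝ) < 2*A)]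
      nlinarith [hA78]
    linarith
end

section
/- Let β ∈ (π/2, π) and A ∈ (0, 1) satisfy tan β > −A/√(1 − A²). For σ ∈ (0, √(1 − A²)) sufficiently close to √(1 − A²), define λ(σ) = (A cos β + σ sin β)/(1 − A² − σ²), a(σ) = √( ((2A² + 2σ² − 1) A cos β + σ sin β)/(A cos β + σ sin β) ), k(σ) = 1/√(1 + 4λ(σ)² a(σ)²), θ̄₁(σ) = arcsin(A/√(A² + σ²)) − β, z̄(σ) = A·arccosh(√(A² + σ²)/A), and G(σ) = −2 λ(σ) k(σ) · [ z̄(σ) − (1/(2λ(σ))) ∫_{θ̄₁(σ)}^{π} ( sin²x / √(sin²x + 4λ(σ)² a(σ)²) − sin x ) dx ]. Then all of these quantities are well defined for σ in a left neighborhood of √(1 − A²), and lim_{σ → √(1−A²)⁻} G(σ) = A·arccosh(1/A) > 0. -/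
/-!
As `σ → √(1 - A²)⁻` the denominator `1 - A² - σ²` of `λ` tends to `0⁺` while its numerator
`A cos β + σ sin β` has a negative limit (this is the condition on `tan β`), so `λ → -∞`;
the numerator and denominator of `a²` have the same limit, so `a → 1`.
Hence `-2λk = -2λ / √(1 + (-2λ)² a²) → 1` and `k → 0`. The integrand is bounded by `2`, so
`G = (-2λk) z̄ + k ∫ ⋯` tends to `lim z̄ = A arcosh (1 / A)`, which is positive since `1 / A > 1`.
-/

/-- The inverse hyperbolic cosine, `arcosh : [1,∞) → [0,∞)`. -/
noncomputable def arcosh (x : ℝ) : ℝ := Real.log (x + Real.sqrt (x ^ 2 - 1))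

open Filter Topology Set
open scoped Real

section

open Real

lemma add_mul_sin_neg_of_tan_gt {A r β : ℝ} (hcos : cos β < 0) (hr : 0 < r)
    (htan : tan β > -A / r) : A * cos β + r * sin β < 0 := by
  rw [tan_eq_sin_div_cos, gt_iff_lt, lt_div_iff_of_neg hcos, div_mul_eq_mul_div,
    lt_div_iff₀ hr] at htan
  linarith

lemma exists_pos_forall_of_eventually_nhdsLT {p : ℝ → Prop} {b : ℝ}
    (h : ∀ᶠ x in 𝓝[<] b, p x) : ∃ δ > 0, ∀ x, b - δ < x → x < b → p x := by
  obtain ⟨a, ha, hsub⟩ := mem_nhdsLT_iff_exists_Ioo_subset.1 h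
  exact ⟨b - a, sub_pos.2 ha, fun x h₁ h₂ => hsub ⟨by linarith, h₂⟩⟩

lemma continuousAt_arcosh {x : ℝ} (hx : 0 < x) : ContinuousAt _root_.arcosh x :=
  ContinuousAt.log (by fun_prop) (by positivity)

lemma tendsto_div_sqrt_one_add_sq_mul_sq {α : Type*} {l : Filter α} {f g : α → ℝ} {c : ℝ}
    (hf : Tendsto f l atTop) (hg : Tendsto g l (𝓝 c)) (hc : 0 < c) :
    Tendsto (fun x => f x / √(1 + f x ^ 2 * g x ^ 2)) l (𝓝 c⁻¹) := by
  have hlim : Tendsto (fun x => (√((f x)⁻¹ ^ 2 + g x ^ 2))⁻¹) l (𝓝 c⁻¹) := by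
    have := ((hf.inv_tendsto_atTop.pow 2).add (hg.pow 2)).sqrt.inv₀
    simpa [sqrt_sq hc.le] using this (by simpa [sqrt_sq hc.le] using hc.ne')
  refine hlim.congr' ?_
  filter_upwards [hf.eventually_gt_atTop 0] with x hx
  rw [show 1 + f x ^ 2 * g x ^ 2 = f x ^ 2 * ((f x)⁻¹ ^ 2 + g x ^ 2) by field_simp,
    sqrt_mul (sq_nonneg _), sqrt_sq hx.le]
  field_simp

lemma abs_sin_sq_div_sqrt_sub_sin_le {c : ℝ} (hc : 0 ≤ c) (x : ℝ) :
    |sin x ^ 2 / √(sin x ^ 2 + c) - sin x| ≤ 2 := by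
  have hle : sin x ^ 2 ≤ √(sin x ^ 2 + c) :=
    calc sin x ^ 2 ≤ |sin x| := by
          nlinarith [abs_nonneg (sin x), abs_sin_le_one x, sq_abs (sin x)]
      _ = √(sin x ^ 2) := (sqrt_sq_eq_abs _).symm
      _ ≤ √(sin x ^ 2 + c) := sqrt_le_sqrt (by linarith)
  have h₀ : 0 ≤ sin x ^ 2 / √(sin x ^ 2 + c) := by positivity
  have h₁ : sin x ^ 2 / √(sin x ^ 2 + c) ≤ 1 := div_le_one_of_le₀ hle (sqrt_nonneg _)
  rw [abs_le]
  constructor <;> linarith [neg_one_le_sin x, sin_le_one x]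

lemma norm_integral_sin_sq_div_sqrt_sub_sin_le {c : ℝ} (hc : 0 ≤ c) (θ : ℝ) :
    ‖∫ x in θ..π, (sin x ^ 2 / √(sin x ^ 2 + c) - sin x)‖ ≤ 2 * |π - θ| :=
  intervalIntegral.norm_integral_le_of_norm_le_const fun x _ =>
    abs_sin_sq_div_sqrt_sub_sin_le hc x

section BoundaryLimits

variable {A u v : ℝ}

lemma tendsto_one_sub_sq_sub_sq (hA : A ^ 2 < 1) :
    Tendsto (fun σ => 1 - A ^ 2 - σ ^ 2) (𝓝[<] √(1 - A ^ 2)) (𝓝[>] 0) := by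
  have hr : 0 < √(1 - A ^ 2) := sqrt_pos.2 (by linarith)
  have hr2 : √(1 - A ^ 2) ^ 2 = 1 - A ^ 2 := sq_sqrt (by linarith)
  refine tendsto_nhdsWithin_iff.2 ⟨?_, ?_⟩
  · have hcont : ContinuousAt (fun σ : ℝ => 1 - A ^ 2 - σ ^ 2) √(1 - A ^ 2) := by fun_prop
    simpa [hr2] using hcont.tendsto.mono_left nhdsWithin_le_nhds
  · filter_upwards [Ioo_mem_nhdsLT hr] with σ hσ
    rw [mem_Ioi, ← hr2]
    nlinarith [mul_pos (sub_pos.2 hσ.2) (add_pos hσ.1 hr)]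

lemma eventually_add_mul_neg (hD : A * u + √(1 - A ^ 2) * v < 0) :
    ∀ᶠ σ in 𝓝[<] √(1 - A ^ 2), A * u + σ * v < 0 :=
  (ContinuousAt.eventually_lt (f := fun σ => A * u + σ * v) (by fun_prop) continuousAt_const
    hD).filter_mono nhdsWithin_le_nhds

lemma tendsto_lambda_atBot (hA : A ^ 2 < 1) (hD : A * u + √(1 - A ^ 2) * v < 0) :
    Tendsto (fun σ => (A * u + σ * v) / (1 - A ^ 2 - σ ^ 2)) (𝓝[<] √(1 - A ^ 2)) atBot := by
  have hnum : ContinuousAt (fun σ => A * u + σ * v) √(1 - A ^ 2) := by fun_prop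
  simpa only [div_eq_mul_inv, Pi.inv_apply] using
    (hnum.tendsto.mono_left nhdsWithin_le_nhds).neg_mul_atTop hD
      (tendsto_one_sub_sq_sub_sq hA).inv_tendsto_nhdsGT_zero

lemma tendsto_waist_sq (hA : A ^ 2 < 1) (hD : A * u + √(1 - A ^ 2) * v < 0) :
    Tendsto (fun σ => ((2 * A ^ 2 + 2 * σ ^ 2 - 1) * A * u + σ * v) / (A * u + σ * v))
      (𝓝[<] √(1 - A ^ 2)) (𝓝 1) := by
  have hr2 : √(1 - A ^ 2) ^ 2 = 1 - A ^ 2 := sq_sqrt (by linarith)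
  have hcont : ContinuousAt
      (fun σ => ((2 * A ^ 2 + 2 * σ ^ 2 - 1) * A * u + σ * v) / (A * u + σ * v))
      √(1 - A ^ 2) :=
    ContinuousAt.div (by fun_prop) (by fun_prop) hD.ne
  have hval : 2 * A ^ 2 + 2 * √(1 - A ^ 2) ^ 2 - 1 = 1 := by rw [hr2]; ring
  simpa [hval, div_self hD.ne] using hcont.tendsto.mono_left nhdsWithin_le_nhds

lemma tendsto_mul_arcosh_sqrt (hA₀ : 0 < A) (hA : A ^ 2 < 1) :
    Tendsto (fun σ => A * _root_.arcosh (√(A ^ 2 + σ ^ 2) / A)) (𝓝[<] √(1 - A ^ 2))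
      (𝓝 (A * _root_.arcosh (1 / A))) := by
  have hval : √(A ^ 2 + √(1 - A ^ 2) ^ 2) / A = 1 / A := by
    rw [sq_sqrt (by linarith), add_sub_cancel, sqrt_one]
  have hcont : ContinuousAt (fun σ => A * _root_.arcosh (√(A ^ 2 + σ ^ 2) / A)) √(1 - A ^ 2) :=
    continuousAt_const.mul <|
      (continuousAt_arcosh (by positivity)).comp_of_eq (by fun_prop) hval
  simpa [hval] using hcont.tendsto.mono_left nhdsWithin_le_nhds

end BoundaryLimits

theorem tendsto_rescaled_height {l : Filter ℝ} {lam a k θ1 zbar G : ℝ → ℝ} {z C : ℝ}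
    (hk : ∀ σ, k σ = 1 / √(1 + 4 * lam σ ^ 2 * a σ ^ 2))
    (hG : ∀ σ, G σ = -2 * lam σ * k σ * (zbar σ - 1 / (2 * lam σ) *
      ∫ x in θ1 σ..π, (sin x ^ 2 / √(sin x ^ 2 + 4 * lam σ ^ 2 * a σ ^ 2) - sin x)))
    (hlam : Tendsto lam l atBot) (ha : Tendsto a l (𝓝 1)) (hz : Tendsto zbar l (𝓝 z))
    (hθ : ∀ σ, |θ1 σ| ≤ C) : Tendsto G l (𝓝 z) := by
  set I := fun σ =>
    ∫ x in θ1 σ..π, (sin x ^ 2 / √(sin x ^ 2 + 4 * lam σ ^ 2 * a σ ^ 2) - sin x)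
  have hlam₂ : Tendsto (fun σ => -2 * lam σ) l atTop := hlam.const_mul_atBot_of_neg (by norm_num)
  have hscale : Tendsto (fun σ => -2 * lam σ * k σ) l (𝓝 1) := by
    have := tendsto_div_sqrt_one_add_sq_mul_sq hlam₂ ha one_pos
    rw [inv_one] at this
    refine this.congr fun σ => ?_
    rw [hk, mul_one_div]
    ring_nf
  have hk₀ : Tendsto k l (𝓝 0) := by
    have := hscale.mul hlam₂.inv_tendsto_atTop
    rw [mul_zero] at this
    refine this.congr' ?_
    filter_upwards [hlam.eventually_lt_atBot 0] with σ hσ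
    have hne := hσ.ne
    simp only [Pi.inv_apply]
    field_simp
  have hkI : Tendsto (fun σ => k σ * I σ) l (𝓝 0) := by
    refine hk₀.zero_mul_isBoundedUnder_le (isBoundedUnder_of ⟨2 * (π + C), fun σ => ?_⟩)
    calc ‖I σ‖ ≤ 2 * |π - θ1 σ| := norm_integral_sin_sq_div_sqrt_sub_sin_le (by positivity) _
      _ ≤ 2 * (π + C) := by
        have := abs_sub π (θ1 σ)
        rw [abs_of_pos pi_pos] at this
        linarith [hθ σ]
  have := (hscale.mul hz).add hkI
  rw [one_mul, add_zero] at this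
  refine this.congr' ?_
  filter_upwards [hlam.eventually_lt_atBot 0] with σ hσ
  have hsplit : ∀ J, -2 * lam σ * k σ * (zbar σ - 1 / (2 * lam σ) * J) =
      -2 * lam σ * k σ * zbar σ + k σ * J := by
    intro J
    have hne := hσ.ne
    field_simp
    ring
  rw [hG, hsplit]

end

/-- Evaluation of `G(σ) = −2λk·z₁(π)` along the upper boundary `σ → √(1 − A²)⁻` of the
parameter region: all quantities are well defined in a left neighborhood, and the
limit of `G` is `A·arcosh(1/A) > 0`. -/
theorem G_upper_limit (β A : ℝ)
    (hβ : β ∈ Set.Ioo (Real.pi / 2) Real.pi) (hA : A ∈ Set.Ioo (0:ℝ) 1)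
    (htan : Real.tan β > -A / Real.sqrt (1 - A ^ 2))
    (lam a k θ1 zbar G : ℝ → ℝ)
    (hlam : ∀ σ, lam σ = (A * Real.cos β + σ * Real.sin β) / (1 - A ^ 2 - σ ^ 2))
    (ha : ∀ σ, a σ =
      Real.sqrt (((2 * A ^ 2 + 2 * σ ^ 2 - 1) * A * Real.cos β + σ * Real.sin β)
        / (A * Real.cos β + σ * Real.sin β)))
    (hk : ∀ σ, k σ = 1 / Real.sqrt (1 + 4 * (lam σ) ^ 2 * (a σ) ^ 2))
    (hθ1 : ∀ σ, θ1 σ = Real.arcsin (A / Real.sqrt (A ^ 2 + σ ^ 2)) - β)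
    (hzbar : ∀ σ, zbar σ = A * arcosh (Real.sqrt (A ^ 2 + σ ^ 2) / A))
    (hG : ∀ σ, G σ = -2 * lam σ * k σ *
      (zbar σ - (1 / (2 * lam σ)) *
        ∫ x in (θ1 σ)..Real.pi,
          ((Real.sin x) ^ 2 / Real.sqrt ((Real.sin x) ^ 2 + 4 * (lam σ) ^ 2 * (a σ) ^ 2)
            - Real.sin x))) :
    (∃ δ > 0, ∀ σ : ℝ,
      Real.sqrt (1 - A ^ 2) - δ < σ → σ < Real.sqrt (1 - A ^ 2) →
      0 < 1 - A ^ 2 - σ ^ 2 ∧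
      A * Real.cos β + σ * Real.sin β < 0 ∧
      lam σ < 0 ∧
      0 < ((2 * A ^ 2 + 2 * σ ^ 2 - 1) * A * Real.cos β + σ * Real.sin β)
          / (A * Real.cos β + σ * Real.sin β) ∧
      0 < a σ) ∧
    Filter.Tendsto G
      (nhdsWithin (Real.sqrt (1 - A ^ 2)) (Set.Iio (Real.sqrt (1 - A ^ 2))))
      (nhds (A * arcosh (1 / A))) ∧
    0 < A * arcosh (1 / A) := by
  obtain ⟨hβ₁, hβ₂⟩ := hβ
  obtain ⟨hA₀, hA₁⟩ := hA
  have hA : A ^ 2 < 1 := by nlinarith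
  have hD : A * Real.cos β + √(1 - A ^ 2) * Real.sin β < 0 :=
    add_mul_sin_neg_of_tan_gt (Real.cos_neg_of_pi_div_two_lt_of_lt hβ₁ (by linarith [Real.pi_pos]))
      (Real.sqrt_pos.2 (by linarith)) htan
  have hratio := tendsto_waist_sq hA hD
  have hsigns := ((tendsto_one_sub_sq_sub_sq hA).eventually_mem self_mem_nhdsWithin).and <|
    (eventually_add_mul_neg hD).and (hratio.eventually (eventually_gt_nhds one_pos))
  refine ⟨exists_pos_forall_of_eventually_nhdsLT <| hsigns.mono fun σ ⟨hden, hnum, hN⟩ =>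
      ⟨hden, hnum, hlam σ ▸ div_neg_of_neg_of_pos hnum hden, hN, ha σ ▸ Real.sqrt_pos.2 hN⟩,
    tendsto_rescaled_height hk hG ((tendsto_lambda_atBot hA hD).congr fun σ => (hlam σ).symm) ?_
      ((tendsto_mul_arcosh_sqrt hA₀ hA).congr fun σ => (hzbar σ).symm) (C := π / 2 + |β|)
      fun σ => ?_,
    mul_pos hA₀ (Real.arcosh_pos ((one_lt_div hA₀).2 hA₁))⟩
  · simpa only [Real.sqrt_one, ← ha] using hratio.sqrt
  · rw [hθ1]
    have := abs_le.2 ⟨Real.neg_pi_div_two_le_arcsin (A / √(A ^ 2 + σ ^ 2)),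
      Real.arcsin_le_pi_div_two _⟩
    linarith [abs_sub (Real.arcsin (A / √(A ^ 2 + σ ^ 2))) β]
end
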